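/- arXiv:2502.13625 — 7 statements merged into one kernel-verified Lean document; each statement's English description precedes it below -/
import Mathlib

section
/- If T : [0,∞) → ℝ satisfies T(0) = 1 and T(t+s) = T(t)·T(s) for all s, t ≥ 0, T(t) ≠ 0 for at least one t > 0, and sup_{t ∈ [0,1]} |T(t)| < ∞, then T is continuous. -/
/-- Automatic continuity of bounded scalar semigroups. -/
theorem scalar_semigroup_continuous (T : ℝ → ℝ)
    (h0 : T 0 = 1)
    (hmul : ∀ s t : ℝ, 0 ≤ s → 0 ≤ t → T (t + s) = T t * T s)
    (hne : ∃ t : ℝ, 0 < t ∧ T t ≠ 0)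
    (hbdd : ∃ M : ℝ, ∀ t ∈ Set.Icc (0:ℝ) 1, |T t| ≤ M) :
    ContinuousOn T (Set.Ici 0) := by
  obtain ⟨t0, ht0, hT0⟩ := hne
  obtain ⟨M, hM⟩ := hbdd
  -- T (n * t0) = (T t0)^n
  have hpow : ∀ n : ℕ, T (n * t0) = (T t0) ^ n := by
    intro n
    induction n with
    | zero => simpa using h0
    | succ n ih =>
      have h1 : ((n : ℝ) + 1) * t0 = (n : ℝ) * t0 + t0 := by ring
      rw [Nat.cast_succ, h1, hmul t0 ((n : ℝ) * t0) ht0.le (by positivity), ih]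
      ring
  -- T never vanishes on [0, ∞)
  have hne' : ∀ t, 0 ≤ t → T t ≠ 0 := by
    intro t ht h
    obtain ⟨n, hn⟩ := exists_nat_ge (t / t0)
    have htn : t ≤ (n : ℝ) * t0 := by
      rw [div_le_iff₀ ht0] at hn; linarith
    have hz : T ((n : ℝ) * t0) = 0 := by
      have h2 := hmul ((n : ℝ) * t0 - t) t (by linarith) ht
      rw [h] at h2
      simpa using h2
    rw [hpow] at hz
    exact hT0 (pow_eq_zero_iff'.mp hz).1
  -- T is positive on [0, ∞)
  have hpos : ∀ t, 0 ≤ t → 0 < T t := by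
    intro t ht
    have h2 : T t = T (t / 2) * T (t / 2) := by
      have h3 := hmul (t / 2) (t / 2) (by linarith) (by linarith)
      rw [show t / 2 + t / 2 = t by ring] at h3
      exact h3
    rw [h2]
    exact mul_self_pos.mpr (hne' (t / 2) (by linarith))
  set f : ℝ → ℝ := fun t => Real.log (T t) with hf
  have fadd : ∀ s t : ℝ, 0 ≤ s → 0 ≤ t → f (t + s) = f t + f s := by
    intro s t hs ht
    simp only [hf]
    rw [hmul s t hs ht, Real.log_mul (hne' t ht) (hne' s hs)]
  set c : ℝ := f 1 with hc
  set g : ℝ → ℝ := fun t => f t - c * t with hg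
  have gadd : ∀ s t : ℝ, 0 ≤ s → 0 ≤ t → g (t + s) = g t + g s := by
    intro s t hs ht
    simp only [hg]
    rw [fadd s t hs ht]; ring
  have g1 : g 1 = 0 := by simp [hg, hc]
  have gper : ∀ t, 0 ≤ t → ∀ n : ℕ, g (t + n) = g t := by
    intro t ht n
    induction n with
    | zero => simp
    | succ n ih =>
      have h1 : t + ((n : ℝ) + 1) = (t + n) + 1 := by ring
      rw [Nat.cast_succ, h1, gadd 1 (t + n) zero_le_one (by positivity), g1, ih, add_zero]
  have gsmul : ∀ t, 0 ≤ t → ∀ n : ℕ, g ((n : ℝ) * t) = (n : ℝ) * g t := by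
    intro t ht n
    induction n with
    | zero => simp [hg, hf, h0]
    | succ n ih =>
      have h1 : ((n : ℝ) + 1) * t = (n : ℝ) * t + t := by ring
      rw [Nat.cast_succ, h1, gadd t ((n : ℝ) * t) ht (by positivity), ih]
      ring
  have hM1 : 0 < M := lt_of_lt_of_le (hpos 1 zero_le_one)
    (le_trans (le_abs_self _) (hM 1 ⟨zero_le_one, le_refl 1⟩))
  have fupper : ∀ t, t ∈ Set.Icc (0:ℝ) 1 → f t ≤ Real.log M := by
    intro t ht
    exact Real.log_le_log (hpos t ht.1) (le_trans (le_abs_self _) (hM t ht))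
  have flower : ∀ t, t ∈ Set.Icc (0:ℝ) 1 → c - Real.log M ≤ f t := by
    intro t ht
    have h1 : f (t + (1 - t)) = f t + f (1 - t) := fadd (1 - t) t (by linarith [ht.2]) ht.1
    rw [show t + (1 - t) = 1 by ring] at h1
    have h2 := fupper (1 - t) ⟨by linarith [ht.2], by linarith [ht.1]⟩
    rw [← hc] at h1
    linarith
  set C : ℝ := Real.log M + 2 * |c| with hC
  have gbound01 : ∀ t, t ∈ Set.Icc (0:ℝ) 1 → |g t| ≤ C := by
    intro t ht
    have h1 := fupper t ht
    have h2 := flower t ht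
    have h3 : |c * t| ≤ |c| := by
      rw [abs_mul]
      calc |c| * |t| ≤ |c| * 1 := by
            apply mul_le_mul_of_nonneg_left _ (abs_nonneg c)
            rw [abs_le]; exact ⟨by linarith [ht.1], ht.2⟩
        _ = |c| := mul_one _
    have h4 := abs_le.mp h3
    rw [abs_le]
    constructor <;> simp only [hg, hC] <;>
      linarith [le_abs_self c, neg_abs_le c]
  have gboundAll : ∀ t, 0 ≤ t → |g t| ≤ C := by
    intro t ht
    have hfr : t - (⌊t⌋₊ : ℝ) ∈ Set.Icc (0:ℝ) 1 := by
      constructor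
      · linarith [Nat.floor_le ht]
      · linarith [(Nat.lt_floor_add_one t).le]
    have h1 := gper (t - (⌊t⌋₊ : ℝ)) hfr.1 ⌊t⌋₊
    rw [show t - (⌊t⌋₊ : ℝ) + (⌊t⌋₊ : ℝ) = t by ring] at h1
    rw [h1]
    exact gbound01 _ hfr
  have gzero : ∀ t, 0 ≤ t → g t = 0 := by
    intro t ht
    by_contra h
    have hgt : 0 < |g t| := abs_pos.mpr h
    obtain ⟨n, hn⟩ := exists_nat_gt (C / |g t|)
    have h1 : |g ((n : ℝ) * t)| ≤ C := gboundAll _ (by positivity)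
    rw [gsmul t ht n, abs_mul, Nat.abs_cast] at h1
    have h2 : C < (n : ℝ) * |g t| := (div_lt_iff₀ hgt).mp hn
    linarith
  have hTexp : ∀ t ∈ Set.Ici (0:ℝ), T t = Real.exp (c * t) := by
    intro t ht
    have h1 := gzero t ht
    have hft : f t = c * t := by
      simp only [hg] at h1; linarith
    rw [← hft, hf]
    exact (Real.exp_log (hpos t ht)).symm
  exact ContinuousOn.congr
    ((Real.continuous_exp.comp (continuous_const.mul continuous_id)).continuousOn) hTexp
end

section
/- If T : [0,∞) → ℝ is a scalar semigroup (T(0)=1, T(t+s)=T(t)T(s)) with sup_{t∈[0,1]} |T(t)| = M < ∞, and liminf_{t↓0} T(t) < 1 while T(t) ≥ 0 for all t, then T(1) = 0. -/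
/-- If a nonnegative scalar semigroup bounded on [0,1] has liminf at 0⁺ below 1,
then it vanishes at time 1. -/
theorem scalar_semigroup_liminf_lt_one (T : ℝ → ℝ) (M : ℝ)
    (h0 : T 0 = 1)
    (hmul : ∀ s t : ℝ, 0 ≤ s → 0 ≤ t → T (t + s) = T t * T s)
    (hbdd : ∀ t ∈ Set.Icc (0:ℝ) 1, |T t| ≤ M)
    (hnn : ∀ t : ℝ, 0 ≤ t → 0 ≤ T t)
    (hliminf : Filter.liminf T (nhdsWithin 0 (Set.Ioi 0)) < 1) :
    T 1 = 0 := by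
  set l := nhdsWithin (0:ℝ) (Set.Ioi 0) with hl
  have hM : 1 ≤ M := by
    have := hbdd 0 ⟨le_refl _, zero_le_one⟩
    rwa [h0, abs_one] at this
  -- power rule
  have hpow : ∀ (n : ℕ) (t : ℝ), 0 ≤ t → T (n * t) = T t ^ n := by
    intro n
    induction n with
    | zero => intro t ht; simpa using h0
    | succ n ih =>
      intro t ht
      have : ((n : ℝ) + 1) * t = (n : ℝ) * t + t := by ring
      push_cast
      rw [this, hmul t ((n:ℝ)*t) ht (by positivity), ih t ht, pow_succ]
  set c : ℝ := max (Filter.liminf T l) 0 with hc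
  have hc1 : c < 1 := by
    rcases max_cases (Filter.liminf T l) 0 with ⟨h, _⟩ | ⟨h, _⟩ <;> rw [hc, h]
    · exact hliminf
    · exact one_pos
  have hc0 : 0 ≤ c := le_max_right _ _
  have hcob : Filter.IsCoboundedUnder (· ≥ ·) l T := by
    apply Filter.isCoboundedUnder_ge_of_eventually_le l (x := M)
    filter_upwards [Filter.eventually_of_mem (Ioo_mem_nhdsGT_of_mem
      (Set.mem_Ico.mpr ⟨le_refl (0:ℝ), one_pos⟩)) (fun t ht => ht)] with t ht
    have := hbdd t ⟨le_of_lt ht.1, le_of_lt ht.2⟩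
    exact (abs_le.mp this).2
  -- frequently T t < (c+1)/2
  have hfreq : ∃ᶠ t in l, T t < (c + 1) / 2 := by
    apply Filter.frequently_lt_of_liminf_lt hcob
    calc Filter.liminf T l ≤ c := le_max_left _ _
      _ < (c + 1) / 2 := by linarith
  have key : ∀ n : ℕ, T 1 ≤ ((c + 1) / 2) ^ n * M := by
    intro n
    have hev : ∀ᶠ t in l, t ∈ Set.Ioo (0:ℝ) (1 / (n + 1)) :=
      Filter.eventually_of_mem (Ioo_mem_nhdsGT_of_mem
        (Set.mem_Ico.mpr ⟨le_refl (0:ℝ), by positivity⟩)) (fun t ht => ht)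
    obtain ⟨t, hTt, ht0, htn⟩ := (hfreq.and_eventually hev).exists
    have ht0' : 0 ≤ t := le_of_lt ht0
    have hnt : (n : ℝ) * t ≤ 1 := by
      have : (n : ℝ) * t ≤ ((n : ℝ) + 1) * t := by nlinarith
      have h2 : ((n : ℝ) + 1) * t < 1 := by
        rw [lt_div_iff₀ (by positivity : (0:ℝ) < (n:ℝ)+1)] at htn
        linarith [mul_comm t ((n:ℝ)+1)]
      linarith
    have hsplit : T 1 = T t ^ n * T (1 - n * t) := by
      rw [← hpow n t ht0', ← hmul (1 - n*t) ((n:ℝ)*t) (by linarith) (by positivity)]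
      norm_num
    rw [hsplit]
    have hTtn : T t ≤ (c + 1) / 2 := le_of_lt hTt
    have hTtnn : 0 ≤ T t := hnn t ht0'
    have hbound : T (1 - n * t) ≤ M := by
      have := hbdd (1 - n*t) ⟨by linarith, by nlinarith⟩
      exact (abs_le.mp this).2
    have hbnn : 0 ≤ T (1 - n * t) := hnn _ (by linarith)
    exact mul_le_mul (pow_le_pow_left₀ hTtnn hTtn n) hbound hbnn (by positivity)
  have htend : Filter.Tendsto (fun n : ℕ => ((c + 1) / 2) ^ n * M) Filter.atTop (nhds 0) := by
    rw [show (0:ℝ) = 0 * M by ring]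
    exact (tendsto_pow_atTop_nhds_zero_of_lt_one (by positivity) (by linarith)).mul_const M
  have h1 : T 1 ≤ 0 := ge_of_tendsto' htend key
  linarith [hnn 1 zero_le_one]
end

section
/- Let T : [0,∞) → Matrix (Fin n) (Fin n) ℝ be a semigroup (T(0) = 1, T(t+s) = T(t)·T(s)) such that T(t) has nonnegative entries for all t, T(t₀) is invertible for some t₀ > 0, and sup_{t∈[0,1]} ‖T(t)‖ < ∞. Then T is continuous. -/
open Filter Topology Matrix

/-- A nonnegative matrix with a nonnegative right inverse is monomial:
its zero pattern is given by a permutation. -/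
lemma msc_exists_perm {n : ℕ} {A F : Matrix (Fin n) (Fin n) ℝ}
    (hA : ∀ i j, 0 ≤ A i j) (hF : ∀ i j, 0 ≤ F i j) (hAF : A * F = 1) :
    ∃ σ : Equiv.Perm (Fin n), ∀ i j, j ≠ σ i → A i j = 0 := by
  classical
  have diag : ∀ i, ∃ k, 0 < A i k * F k i := by
    intro i
    by_contra h
    push_neg at h
    have h1 : (A * F) i i = 1 := by rw [hAF, Matrix.one_apply_eq]
    rw [Matrix.mul_apply] at h1
    have h2 : ∑ k, A i k * F k i ≤ 0 := Finset.sum_nonpos (fun k _ => h k)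
    linarith
  choose f hf using diag
  have hfA : ∀ i, 0 < A i (f i) ∧ 0 < F (f i) i := by
    intro i
    rcases (hA i (f i)).lt_or_eq with h | h
    · rcases (hF (f i) i).lt_or_eq with h' | h'
      · exact ⟨h, h'⟩
      · exfalso; have := hf i; rw [← h', mul_zero] at this; exact lt_irrefl 0 this
    · exfalso; have := hf i; rw [← h, zero_mul] at this; exact lt_irrefl 0 this
  have colzero : ∀ i l, l ≠ i → A l (f i) = 0 := by
    intro i l hl
    have h0 : (A * F) l i = 0 := by rw [hAF]; exact Matrix.one_apply_ne hl
    rw [Matrix.mul_apply] at h0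
    have hz := (Finset.sum_eq_zero_iff_of_nonneg
      (fun k _ => mul_nonneg (hA l k) (hF k i))).mp h0 (f i) (Finset.mem_univ _)
    rcases mul_eq_zero.mp hz with h | h
    · exact h
    · exact absurd h (ne_of_gt (hfA i).2)
  have finj : Function.Injective f := by
    intro a b hab
    by_contra hne
    have h1 := colzero b a hne
    rw [← hab] at h1
    exact absurd h1 (ne_of_gt (hfA a).1)
  let σ : Equiv.Perm (Fin n) := Equiv.ofBijective f (Finite.injective_iff_bijective.mp finj)
  refine ⟨σ, fun i j hij => ?_⟩
  have hσ : ∀ x, σ x = f x := fun x => rfl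
  have hji : j = f (σ.symm j) := by rw [← hσ, Equiv.apply_symm_apply]
  have hne : i ≠ σ.symm j := by
    intro h
    apply hij
    rw [← h] at hji
    rw [hji, hσ]
  rw [hji]
  exact colzero (σ.symm j) i hne

/-- Zero pattern of powers of a matrix whose pattern is a permutation. -/
lemma msc_pow_pattern {n : ℕ} {A : Matrix (Fin n) (Fin n) ℝ} {σ : Equiv.Perm (Fin n)}
    (hσ : ∀ i j, j ≠ σ i → A i j = 0) :
    ∀ m i j, j ≠ (σ ^ m) i → (A ^ m) i j = 0 := by
  intro m
  induction m with
  | zero =>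
    intro i j h
    rw [pow_zero] at h ⊢
    exact Matrix.one_apply_ne (fun e => h (by rw [← e]; rfl))
  | succ m ih =>
    intro i j h
    rw [pow_succ, Matrix.mul_apply]
    apply Finset.sum_eq_zero
    intro k _
    by_cases hk : k = (σ ^ m) i
    · refine mul_eq_zero_of_right _ (hσ k j ?_)
      rw [hk]
      intro e
      apply h
      rw [pow_succ', Equiv.Perm.mul_apply] at *
      exact e
    · exact mul_eq_zero_of_left (ih i k hk) _

/-- A matrix all of whose powers have entries in `[0, M']` and whose determinant is `1`
satisfies `A ^ (card (Perm (Fin n))) = 1`. -/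
lemma msc_pow_eq_one {n : ℕ} {M' : ℝ} {A : Matrix (Fin n) (Fin n) ℝ}
    (hK : ∀ k : ℕ, ∀ i j, (A ^ k) i j ∈ Set.Icc (0:ℝ) M')
    (hdet : A.det = 1) :
    A ^ (Fintype.card (Equiv.Perm (Fin n))) = 1 := by
  classical
  haveI : FirstCountableTopology (Matrix (Fin n) (Fin n) ℝ) :=
    inferInstanceAs (FirstCountableTopology ((Fin n) → (Fin n) → ℝ))
  set K : Set (Matrix (Fin n) (Fin n) ℝ) := {X | ∀ i j, X i j ∈ Set.Icc (0:ℝ) M'} with hKdef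
  have hKc : IsCompact K := by
    have hKeq : K = Set.univ.pi (fun _ : Fin n => Set.univ.pi fun _ : Fin n => Set.Icc (0:ℝ) M') := by
      ext X
      constructor
      · intro h i _ j _; exact h i j
      · intro h i j; exact h i (Set.mem_univ i) j (Set.mem_univ j)
    rw [hKeq]
    exact isCompact_univ_pi fun _ => isCompact_univ_pi fun _ => isCompact_Icc
  have hKmem : ∀ k : ℕ, A ^ k ∈ K := fun k i j => hK k i j
  -- a convergent subsequence of powers
  obtain ⟨B, hBK, φ, hφ, hB⟩ := hKc.tendsto_subseq (x := fun k => A ^ k) hKmem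
  have hdetB : B.det = 1 := by
    have h2 := ((Continuous.matrix_det continuous_id).tendsto B).comp hB
    have h2' : Tendsto (fun _ : ℕ => (1:ℝ)) atTop (𝓝 B.det) :=
      h2.congr (fun j => by simp [Function.comp, Matrix.det_pow, hdet])
    exact tendsto_nhds_unique h2' tendsto_const_nhds
  have hBu : IsUnit B.det := by rw [hdetB]; exact isUnit_one
  set g : ℕ → ℕ := fun j => φ (j+1) - φ j with hgdef
  have hg1 : ∀ j, 1 ≤ g j := by
    intro j
    have := hφ (lt_add_one j)
    simp only [hgdef]
    omega
  have hrel : ∀ j, A ^ (φ (j+1)) = A ^ (g j) * A ^ (φ j) := by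
    intro j
    rw [← pow_add]
    congr 1
    have := hφ (lt_add_one j)
    simp only [hgdef]
    omega
  obtain ⟨E, hEK, θ, hθ, hE⟩ := hKc.tendsto_subseq (x := fun j => A ^ g j) (fun j => hKmem _)
  have hθ1 : StrictMono (fun l => θ l + 1) := fun a b h => Nat.add_lt_add_right (hθ h) 1
  have htends1 : Tendsto (fun l => A ^ (φ (θ l + 1))) atTop (𝓝 B) := hB.comp hθ1.tendsto_atTop
  have htends2 : Tendsto (fun l => A ^ (φ (θ l))) atTop (𝓝 B) := hB.comp hθ.tendsto_atTop
  have hprod : Tendsto (fun l => A ^ (g (θ l)) * A ^ (φ (θ l))) atTop (𝓝 (E * B)) :=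
    hE.mul htends2
  have hEB : E * B = B := by
    have h1 : Tendsto (fun l => A ^ (φ (θ l + 1))) atTop (𝓝 (E * B)) :=
      hprod.congr (fun l => (hrel (θ l)).symm)
    exact tendsto_nhds_unique h1 htends1
  have hE1 : E = 1 := by
    calc E = E * (B * B⁻¹) := by rw [Matrix.mul_nonsing_inv B hBu, mul_one]
    _ = (E * B) * B⁻¹ := by rw [Matrix.mul_assoc]
    _ = B * B⁻¹ := by rw [hEB]
    _ = 1 := Matrix.mul_nonsing_inv B hBu
  -- now extract F with F * A = 1 and F nonneg
  have hAm : Tendsto (fun l => A ^ (g (θ l))) atTop (𝓝 1) := by rw [← hE1]; exact hE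
  obtain ⟨F, hFK, ρ, hρ, hF⟩ := hKc.tendsto_subseq (x := fun l => A ^ (g (θ l) - 1)) (fun l => hKmem _)
  have hrel2 : ∀ l, A ^ (g (θ (ρ l))) = A ^ (g (θ (ρ l)) - 1) * A := by
    intro l
    rw [← pow_succ]
    congr 1
    have := hg1 (θ (ρ l))
    omega
  have hlhs : Tendsto (fun l => A ^ (g (θ (ρ l)))) atTop (𝓝 1) := hAm.comp hρ.tendsto_atTop
  have hrhs : Tendsto (fun l => A ^ (g (θ (ρ l)) - 1) * A) atTop (𝓝 (F * A)) :=
    hF.mul tendsto_const_nhds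
  have hFA : F * A = 1 := by
    have h1 : Tendsto (fun l => A ^ (g (θ (ρ l)))) atTop (𝓝 (F * A)) :=
      hrhs.congr (fun l => (hrel2 l).symm)
    exact tendsto_nhds_unique h1 hlhs
  have hAF : A * F = 1 := mul_eq_one_comm.mpr hFA
  have hApos : ∀ i j, 0 ≤ A i j := by
    intro i j
    have := (hK 1 i j).1
    rwa [pow_one] at this
  have hFpos : ∀ i j, 0 ≤ F i j := fun i j => (hFK i j).1
  obtain ⟨σ, hσ⟩ := msc_exists_perm hApos hFpos hAF
  set N := Fintype.card (Equiv.Perm (Fin n)) with hNdef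
  have hσN : σ ^ N = 1 := pow_card_eq_one
  have offdiag : ∀ i j, j ≠ i → (A ^ N) i j = 0 := by
    intro i j h
    refine msc_pow_pattern hσ N i j ?_
    rw [hσN]
    simpa using h
  set d : Fin n → ℝ := fun i => (A ^ N) i i with hddef
  have hdiag : A ^ N = Matrix.diagonal d := by
    ext i j
    by_cases h : i = j
    · subst h; rw [Matrix.diagonal_apply_eq]
    · rw [Matrix.diagonal_apply_ne _ h]
      exact offdiag i j (Ne.symm h)
  have hprodd : ∏ i, d i = 1 := by
    rw [← Matrix.det_diagonal, ← hdiag, Matrix.det_pow, hdet, one_pow]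
  have hd0 : ∀ i, 0 ≤ d i := fun i => (hK N i i).1
  have hdle : ∀ i, d i ≤ 1 := by
    intro i
    by_contra hgt
    push_neg at hgt
    have hb : ∀ k : ℕ, (d i) ^ k ≤ M' := by
      intro k
      have h1 : (A ^ N) ^ k = Matrix.diagonal (d ^ k) := by rw [hdiag, Matrix.diagonal_pow]
      have h2 := (hK (N * k) i i).2
      rw [pow_mul, h1] at h2
      simpa using h2
    obtain ⟨k, hk⟩ := ((tendsto_pow_atTop_atTop_of_one_lt hgt).eventually_gt_atTop M').exists
    exact absurd (hb k) (not_le.mpr hk)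
  have hd1 : ∀ i, d i = 1 := by
    intro i
    have h1 : d i * ∏ j ∈ Finset.univ.erase i, d j = 1 := by
      rw [Finset.mul_prod_erase _ _ (Finset.mem_univ i), hprodd]
    have h2 : ∏ j ∈ Finset.univ.erase i, d j ≤ 1 :=
      Finset.prod_le_one (fun j _ => hd0 j) (fun j _ => hdle j)
    have h3 : d i * (∏ j ∈ Finset.univ.erase i, d j) ≤ d i * 1 :=
      mul_le_mul_of_nonneg_left h2 (hd0 i)
    rw [h1, mul_one] at h3
    exact le_antisymm (hdle i) h3
  rw [hdiag, show d = fun _ => (1:ℝ) from funext fun i => hd1 i]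
  exact Matrix.diagonal_one
/-- Automatic continuity of entrywise-nonnegative matrix semigroups that are
bounded close to 0 and contain an invertible matrix. -/
theorem matrix_semigroup_continuous (n : ℕ) (T : ℝ → Matrix (Fin n) (Fin n) ℝ)
    (h0 : T 0 = 1)
    (hmul : ∀ s t : ℝ, 0 ≤ s → 0 ≤ t → T (t + s) = T t * T s)
    (hpos : ∀ t : ℝ, 0 ≤ t → ∀ i j, 0 ≤ T t i j)
    (hinv : ∃ t₀ : ℝ, 0 < t₀ ∧ IsUnit (T t₀))
    (hbdd : ∃ M : ℝ, ∀ t ∈ Set.Icc (0:ℝ) 1, ∀ i j, |T t i j| ≤ M) :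
    ContinuousOn T (Set.Ici 0) := by
  classical
  haveI : FirstCountableTopology (Matrix (Fin n) (Fin n) ℝ) :=
    inferInstanceAs (FirstCountableTopology ((Fin n) → (Fin n) → ℝ))
  obtain ⟨M, hM⟩ := hbdd
  set M' : ℝ := max M 1 with hM'def
  have hM'1 : (1:ℝ) ≤ M' := le_max_right _ _
  set K : Set (Matrix (Fin n) (Fin n) ℝ) := {A | ∀ i j, A i j ∈ Set.Icc (0:ℝ) M'} with hKdef
  have hKc : IsCompact K := by
    have hKeq : K = Set.univ.pi (fun _ : Fin n => Set.univ.pi fun _ : Fin n => Set.Icc (0:ℝ) M') := by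
      ext X
      constructor
      · intro h i _ j _; exact h i j
      · intro h i j; exact h i (Set.mem_univ i) j (Set.mem_univ j)
    rw [hKeq]
    exact isCompact_univ_pi fun _ => isCompact_univ_pi fun _ => isCompact_Icc
  have hTK : ∀ t : ℝ, 0 ≤ t → t ≤ 1 → T t ∈ K := by
    intro t h1 h2 i j
    exact ⟨hpos t h1 i j,
      le_trans (le_trans (le_abs_self _) (hM t ⟨h1, h2⟩ i j)) (le_max_left _ _)⟩
  -- power law
  have Tpow : ∀ s : ℝ, 0 ≤ s → ∀ k : ℕ, T ((k:ℝ) * s) = T s ^ k := by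
    intro s hs k
    induction k with
    | zero => simpa using h0
    | succ k ih =>
      have e1 : ((k+1 : ℕ):ℝ) * s = (k:ℝ) * s + s := by push_cast; ring
      rw [e1, hmul s ((k:ℝ)*s) hs (mul_nonneg (Nat.cast_nonneg k) hs), ih, pow_succ]
  -- determinants are positive
  have detnn : ∀ t : ℝ, 0 ≤ t → 0 ≤ (T t).det := by
    intro t ht
    have h2 : T t = T (t/2) * T (t/2) := by
      have := hmul (t/2) (t/2) (by linarith) (by linarith)
      rwa [show t/2 + t/2 = t by ring] at this
    rw [h2, Matrix.det_mul]
    exact mul_self_nonneg _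
  have detpos : ∀ t : ℝ, 0 ≤ t → 0 < (T t).det := by
    intro t ht
    rcases (detnn t ht).lt_or_eq with h | h
    · exact h
    exfalso
    obtain ⟨t₀, ht₀, hu⟩ := hinv
    obtain ⟨k, hk⟩ := exists_nat_ge (t / t₀)
    have hkt : t ≤ (k:ℝ) * t₀ := by rw [div_le_iff₀ ht₀] at hk; linarith
    have e : T ((k:ℝ)*t₀) = T t * T ((k:ℝ)*t₀ - t) := by
      have := hmul ((k:ℝ)*t₀ - t) t (by linarith) ht
      rwa [show t + ((k:ℝ)*t₀ - t) = (k:ℝ)*t₀ by ring] at this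
    have hdetk : ((T t₀).det)^k = (T t).det * (T ((k:ℝ)*t₀ - t)).det := by
      rw [← Matrix.det_pow, ← Tpow t₀ ht₀.le k, e, Matrix.det_mul]
    have hne : (T t₀).det ≠ 0 := (Matrix.isUnit_iff_isUnit_det (T t₀)).mp hu |>.ne_zero
    exact pow_ne_zero k hne (by rw [hdetk, h.symm, zero_mul])
  -- determinant bounds
  obtain ⟨C, hC⟩ := hKc.exists_bound_of_continuousOn
    ((Continuous.matrix_det continuous_id).continuousOn)
  have hCd : ∀ t : ℝ, 0 ≤ t → t ≤ 1 → (T t).det ≤ C := by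
    intro t h1 h2
    have := hC _ (hTK t h1 h2)
    rw [Real.norm_eq_abs] at this
    exact le_trans (le_abs_self _) this
  have hC0 : 0 < C := lt_of_lt_of_le (detpos 1 zero_le_one) (hCd 1 zero_le_one le_rfl)
  set c : ℝ := (T 1).det / C with hcdef
  have hc0 : 0 < c := div_pos (detpos 1 zero_le_one) hC0
  have hcd : ∀ t : ℝ, 0 ≤ t → t ≤ 1 → c ≤ (T t).det := by
    intro t h1 h2
    have e : (T 1).det = (T (1-t)).det * (T t).det := by
      have := hmul t (1 - t) h1 (by linarith)
      rw [show (1 - t) + t = 1 by ring] at this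
      rw [this, Matrix.det_mul]
    have hle : (T (1-t)).det ≤ C := hCd (1-t) (by linarith) (by linarith)
    have hp : 0 < (T t).det := detpos t h1
    rw [hcdef, div_le_iff₀ hC0, e]
    nlinarith
  -- the set of limit points of T at 0+
  set S : Set (Matrix (Fin n) (Fin n) ℝ) :=
    {A | ∃ u : ℕ → ℝ, (∀ m, 0 < u m ∧ u m ≤ 1) ∧ Tendsto u atTop (𝓝 0) ∧
      Tendsto (fun m => T (u m)) atTop (𝓝 A)} with hSdef
  have hSK : ∀ A ∈ S, A ∈ K := by
    rintro A ⟨u, hu, hu0, hTu⟩ i j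
    have hent : Tendsto (fun m => T (u m) i j) atTop (𝓝 (A i j)) := by
      have := ((Continuous.matrix_elem continuous_id i j).tendsto A).comp hTu
      simpa [Function.comp_def] using this
    constructor
    · exact ge_of_tendsto hent (Eventually.of_forall fun m => hpos _ (hu m).1.le i j)
    · exact le_of_tendsto hent (Eventually.of_forall fun m => (hTK _ (hu m).1.le (hu m).2 i j).2)
  have hSdet : ∀ A ∈ S, c ≤ A.det ∧ A.det ≤ C := by
    rintro A ⟨u, hu, hu0, hTu⟩
    have hdt : Tendsto (fun m => (T (u m)).det) atTop (𝓝 A.det) := by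
      have := ((Continuous.matrix_det continuous_id).tendsto A).comp hTu
      simpa [Function.comp_def] using this
    exact ⟨ge_of_tendsto hdt (Eventually.of_forall fun m => hcd _ (hu m).1.le (hu m).2),
           le_of_tendsto hdt (Eventually.of_forall fun m => hCd _ (hu m).1.le (hu m).2)⟩
  -- powers of elements of S are in S
  have hSpow : ∀ A ∈ S, ∀ k : ℕ, 1 ≤ k → A ^ k ∈ S := by
    rintro A ⟨u, hu, hu0, hTu⟩ k hk
    have hkpos : (0:ℝ) < k := by exact_mod_cast hk
    have hev : ∀ᶠ m in atTop, u m < 1/(k:ℝ) :=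
      hu0.eventually (eventually_lt_nhds (by positivity))
    obtain ⟨m₀, hm₀⟩ := Filter.eventually_atTop.mp hev
    refine ⟨fun m => (k:ℝ) * u (m + m₀), ?_, ?_, ?_⟩
    · intro m
      refine ⟨mul_pos hkpos (hu _).1, ?_⟩
      have h1 := (hm₀ (m + m₀) (by omega)).le
      have h2 : (k:ℝ) * u (m+m₀) ≤ (k:ℝ) * (1/(k:ℝ)) :=
        mul_le_mul_of_nonneg_left h1 hkpos.le
      rwa [mul_one_div, div_self hkpos.ne'] at h2
    · have h1 : Tendsto (fun m => u (m + m₀)) atTop (𝓝 0) :=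
        hu0.comp (tendsto_add_atTop_nat m₀)
      simpa using h1.const_mul (k:ℝ)
    · have h1 : ∀ m : ℕ, T ((k:ℝ) * u (m + m₀)) = T (u (m+m₀)) ^ k :=
        fun m => Tpow _ (hu _).1.le k
      have h2 : Tendsto (fun m => T (u (m + m₀))) atTop (𝓝 A) :=
        hTu.comp (tendsto_add_atTop_nat m₀)
      have h3 := h2.pow k
      exact h3.congr (fun m => (h1 m).symm)
  -- the determinant of a limit point is 1
  have hSdet1 : ∀ A ∈ S, A.det = 1 := by
    intro A hA
    have hb : ∀ k : ℕ, 1 ≤ k → c ≤ A.det ^ k ∧ A.det ^ k ≤ C := by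
      intro k hk
      have := hSdet _ (hSpow A hA k hk)
      rwa [Matrix.det_pow] at this
    have hpos1 : 0 < A.det := by
      have := (hb 1 le_rfl).1
      rw [pow_one] at this
      linarith
    rcases lt_trichotomy A.det 1 with h | h | h
    · exfalso
      have h1 := tendsto_pow_atTop_nhds_zero_of_lt_one hpos1.le h
      have hev := h1.eventually (eventually_lt_nhds hc0)
      obtain ⟨k, hk⟩ := (hev.and (eventually_ge_atTop 1)).exists
      exact absurd (hb k hk.2).1 (not_le.mpr hk.1)
    · exact h
    · exfalso
      have h1 := tendsto_pow_atTop_atTop_of_one_lt h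
      have hev := h1.eventually_gt_atTop C
      obtain ⟨k, hk⟩ := (hev.and (eventually_ge_atTop 1)).exists
      exact absurd (hb k hk.2).2 (not_le.mpr hk.1)
  set N := Fintype.card (Equiv.Perm (Fin n)) with hNdef
  have hN1 : 1 ≤ N := Fintype.card_pos
  -- every limit point to the N-th power is 1
  have hSN : ∀ A ∈ S, A ^ N = 1 := by
    intro A hA
    refine msc_pow_eq_one (M' := M') ?_ (hSdet1 A hA)
    intro k i j
    rcases Nat.eq_zero_or_pos k with hk | hk
    · subst hk
      rw [pow_zero]
      by_cases h : i = j
      · subst h; rw [Matrix.one_apply_eq]; exact ⟨zero_le_one, hM'1⟩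
      · rw [Matrix.one_apply_ne h]; exact ⟨le_refl 0, by linarith⟩
    · exact hSK _ (hSpow A hA k hk) i j
  -- every limit point is 1
  have hS1 : ∀ A ∈ S, A = 1 := by
    rintro A hA
    obtain ⟨u, hu, hu0, hTu⟩ := hA
    have hN0 : (0:ℝ) < N := by exact_mod_cast hN1
    set v : ℕ → ℝ := fun m => u m / N with hvdef
    have hvpos : ∀ m, 0 < v m ∧ v m ≤ 1 := by
      intro m
      refine ⟨div_pos (hu m).1 hN0, ?_⟩
      exact le_trans (div_le_self (hu m).1.le (by exact_mod_cast hN1)) (hu m).2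
    have hv0 : Tendsto v atTop (𝓝 0) := by simpa using hu0.div_const (N:ℝ)
    have hvK : ∀ m, T (v m) ∈ K := fun m => hTK _ (hvpos m).1.le (hvpos m).2
    obtain ⟨R, hRK, φ, hφ, hR⟩ := hKc.tendsto_subseq (x := fun m => T (v m)) hvK
    have hRS : R ∈ S :=
      ⟨v ∘ φ, fun m => hvpos _, hv0.comp hφ.tendsto_atTop, hR⟩
    have hRN : R ^ N = 1 := hSN R hRS
    have heq : ∀ m, T (u (φ m)) = T (v (φ m)) ^ N := by
      intro m
      rw [← Tpow _ (hvpos _).1.le N]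
      congr 1
      rw [hvdef]
      field_simp
    have h1 : Tendsto (fun m => T (u (φ m))) atTop (𝓝 (R ^ N)) :=
      (hR.pow N).congr (fun m => (heq m).symm)
    have h2 : Tendsto (fun m => T (u (φ m))) atTop (𝓝 A) := hTu.comp hφ.tendsto_atTop
    rw [← tendsto_nhds_unique h1 h2]
    exact hRN
  -- T tends to 1 from the right at 0
  have keyIoi : Tendsto T (𝓝[Set.Ioi (0:ℝ)] 0) (𝓝 1) := by
    by_contra hcon
    rw [Filter.tendsto_def] at hcon
    push_neg at hcon
    obtain ⟨U, hU, hnot⟩ := hcon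
    have hseq : ∀ m : ℕ, ∃ t : ℝ, (0 < t ∧ t ≤ 1/((m:ℝ)+1)) ∧ T t ∉ U := by
      intro m
      have hmem : Set.Ioo (0:ℝ) (1/((m:ℝ)+1)) ∈ 𝓝[>] (0:ℝ) :=
        Ioo_mem_nhdsGT_of_mem ⟨le_refl 0, by positivity⟩
      by_contra hno
      push_neg at hno
      apply hnot
      filter_upwards [hmem] with t ht
      exact hno t ⟨ht.1, ht.2.le⟩
    choose u hu1 hu2 using hseq
    have hupos : ∀ m, 0 < u m ∧ u m ≤ 1 := by
      intro m
      refine ⟨(hu1 m).1, le_trans (hu1 m).2 ?_⟩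
      rw [div_le_one (by positivity)]
      exact le_add_of_nonneg_left (Nat.cast_nonneg m)
    have hu0 : Tendsto u atTop (𝓝 0) := by
      refine tendsto_of_tendsto_of_tendsto_of_le_of_le tendsto_const_nhds
        tendsto_one_div_add_atTop_nhds_zero_nat (fun m => (hupos m).1.le) (fun m => (hu1 m).2)
    obtain ⟨A, hAK, φ, hφ, hA⟩ := hKc.tendsto_subseq (x := fun m => T (u m))
      (fun m => hTK _ (hupos m).1.le (hupos m).2)
    have hAS : A ∈ S := ⟨u ∘ φ, fun m => hupos _, hu0.comp hφ.tendsto_atTop, hA⟩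
    have hA1 : A = 1 := hS1 A hAS
    rw [hA1] at hA
    have hev : ∀ᶠ m in atTop, T (u (φ m)) ∈ U := hA hU
    obtain ⟨m, hm⟩ := hev.exists
    exact hu2 (φ m) hm
  -- T tends to 1 within [0, ∞) at 0
  have key : Tendsto T (𝓝[Set.Ici (0:ℝ)] 0) (𝓝 1) := by
    rw [show Set.Ici (0:ℝ) = insert 0 (Set.Ioi 0) from (Set.Ioi_insert).symm,
      nhdsWithin_insert, Filter.tendsto_sup]
    constructor
    · rw [show (1 : Matrix (Fin n) (Fin n) ℝ) = T 0 from h0.symm]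
      exact tendsto_pure_nhds T 0
    · exact keyIoi
  -- the inverse also tends to 1
  have keyinv : Tendsto (fun t => (T t)⁻¹) (𝓝[Set.Ici (0:ℝ)] 0) (𝓝 1) := by
    have hdetT : Tendsto (fun t => (T t).det) (𝓝[Set.Ici (0:ℝ)] 0) (𝓝 1) := by
      have := ((Continuous.matrix_det continuous_id).tendsto (1 : Matrix (Fin n) (Fin n) ℝ)).comp key
      simpa [Function.comp_def, Matrix.det_one] using this
    have hadj : Tendsto (fun t => (T t).adjugate) (𝓝[Set.Ici (0:ℝ)] 0) (𝓝 (1 : Matrix (Fin n) (Fin n) ℝ)) := by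
      have := ((Continuous.matrix_adjugate continuous_id).tendsto (1 : Matrix (Fin n) (Fin n) ℝ)).comp key
      simpa [Function.comp_def, Matrix.adjugate_one] using this
    have hinv2 : Tendsto (fun t => ((T t).det)⁻¹) (𝓝[Set.Ici (0:ℝ)] 0) (𝓝 1) := by
      have := hdetT.inv₀ one_ne_zero
      simpa using this
    have hsmul := hinv2.smul hadj
    rw [one_smul] at hsmul
    refine hsmul.congr fun t => ?_
    rw [Matrix.inv_def, Ring.inverse_eq_inv']
  -- conclusion
  intro t ht
  have ht0 : (0:ℝ) ≤ t := ht
  have ha : Tendsto (fun s => max (t - s) 0) (𝓝[Set.Ici (0:ℝ)] t) (𝓝[Set.Ici (0:ℝ)] 0) := by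
    apply tendsto_nhdsWithin_of_tendsto_nhds_of_eventually_within
    · have h1 : Tendsto (fun s : ℝ => max (t - s) 0) (𝓝 t) (𝓝 (max (t - t) 0)) :=
        ((continuous_const.sub continuous_id).max continuous_const).tendsto t
      rw [show max (t - t) 0 = 0 by simp] at h1
      exact h1.mono_left nhdsWithin_le_nhds
    · exact Eventually.of_forall fun s => Set.mem_Ici.mpr (le_max_right _ _)
  have hb : Tendsto (fun s => max (s - t) 0) (𝓝[Set.Ici (0:ℝ)] t) (𝓝[Set.Ici (0:ℝ)] 0) := by
    apply tendsto_nhdsWithin_of_tendsto_nhds_of_eventually_within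
    · have h1 : Tendsto (fun s : ℝ => max (s - t) 0) (𝓝 t) (𝓝 (max (t - t) 0)) :=
        ((continuous_id.sub continuous_const).max continuous_const).tendsto t
      rw [show max (t - t) 0 = 0 by simp] at h1
      exact h1.mono_left nhdsWithin_le_nhds
    · exact Eventually.of_forall fun s => Set.mem_Ici.mpr (le_max_right _ _)
  have hlim : Tendsto (fun s => (T (max (t - s) 0))⁻¹ * (T (max (s - t) 0) * T t))
      (𝓝[Set.Ici (0:ℝ)] t) (𝓝 (T t)) := by
    have h1 := (keyinv.comp ha).mul ((key.comp hb).mul (tendsto_const_nhds (x := T t)))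
    rw [one_mul, one_mul] at h1
    exact h1
  have hcongr : ∀ s ∈ Set.Ici (0:ℝ),
      (T (max (t - s) 0))⁻¹ * (T (max (s - t) 0) * T t) = T s := by
    intro s hs
    have hs0 : (0:ℝ) ≤ s := hs
    rcases le_total s t with hst | hts
    · rw [show max (s - t) 0 = 0 from max_eq_right (sub_nonpos.mpr hst),
        show max (t - s) 0 = t - s from max_eq_left (sub_nonneg.mpr hst), h0, one_mul]
      have e : T t = T (t - s) * T s := by
        have := hmul s (t - s) hs0 (sub_nonneg.mpr hst)
        rwa [show (t - s) + s = t by ring] at this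
      rw [e, ← Matrix.mul_assoc,
        Matrix.nonsing_inv_mul _ (isUnit_iff_ne_zero.mpr (detpos _ (sub_nonneg.mpr hst)).ne'),
        one_mul]
    · rw [show max (t - s) 0 = 0 from max_eq_right (sub_nonpos.mpr hts),
        show max (s - t) 0 = s - t from max_eq_left (sub_nonneg.mpr hts), h0, inv_one, one_mul]
      have := hmul t (s - t) ht0 (sub_nonneg.mpr hts)
      rw [show (s - t) + t = s by ring] at this
      exact this.symm
  have hfinal : Tendsto T (𝓝[Set.Ici (0:ℝ)] t) (𝓝 (T t)) := by
    refine hlim.congr' ?_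
    filter_upwards [self_mem_nhdsWithin] with s hs
    exact hcongr s hs
  exact hfinal
end

section
/- Let T : [0,∞) → Matrix (Fin n) (Fin n) ℝ be a semigroup with T(t) entrywise nonnegative for each t and sup_{t∈[0,∞)} ‖T(t)‖ < ∞. Then for each t ≥ 0, every eigenvalue λ of T(t) with |λ| = 1 satisfies λ = 1. -/
open Complex Matrix Filter Finset



/-- From spectrum membership to an eigenvector. -/
lemma my_eigvec_of_mem_spectrum {k : ℕ} (A : Matrix (Fin k) (Fin k) ℂ) (μ : ℂ)
    (h : μ ∈ spectrum ℂ A) : ∃ v : Fin k → ℂ, v ≠ 0 ∧ A.mulVec v = μ • v := by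
  rw [← AlgEquiv.spectrum_eq (Matrix.toLinAlgEquiv' (R := ℂ) (n := Fin k)) A] at h
  have h2 := Module.End.hasEigenvalue_iff_mem_spectrum.mpr h
  obtain ⟨v, hv⟩ := h2.exists_hasEigenvector
  refine ⟨v, hv.2, ?_⟩
  have := hv.apply_eq_smul
  rwa [Matrix.toLinAlgEquiv'_apply] at this

lemma my_pow_map_ofReal {k : ℕ} (B : Matrix (Fin k) (Fin k) ℝ) (m : ℕ) :
    (B ^ m).map (Complex.ofReal) = (B.map Complex.ofReal) ^ m := by
  have := map_pow (RingHom.mapMatrix (m := Fin k) Complex.ofRealHom) B m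
  exact this


/-- Eigenvalue modulus bound from entry bounds. -/
lemma my_abs_eig_le {n : ℕ} (A : Matrix (Fin n) (Fin n) ℝ) (C : ℝ)
    (hC : ∀ i j, |A i j| ≤ C) (μ : ℂ) (v : Fin n → ℂ) (hv : v ≠ 0)
    (heig : (A.map Complex.ofReal).mulVec v = μ • v) : ‖μ‖ ≤ n * C := by
  obtain ⟨i1, hi1⟩ : ∃ i, v i ≠ 0 := Function.ne_iff.mp hv
  obtain ⟨i, -, hi⟩ := Finset.exists_max_image Finset.univ (fun i => ‖v i‖)
    ⟨i1, Finset.mem_univ i1⟩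
  have hm : 0 < ‖v i‖ :=
    lt_of_lt_of_le (norm_pos_iff.mpr hi1) (hi i1 (Finset.mem_univ i1))
  have hC0 : 0 ≤ C := le_trans (abs_nonneg _) (hC i i)
  have h1 : ‖μ‖ * ‖v i‖ ≤ (n * C) * ‖v i‖ := by
    have h2 : (A.map Complex.ofReal).mulVec v i = μ * v i := by
      rw [heig]; rfl
    have h3 : ∑ j, ((A i j : ℂ)) * v j = μ * v i := by
      rw [← h2]; simp [Matrix.mulVec, dotProduct]
    calc ‖μ‖ * ‖v i‖ = ‖∑ j, ((A i j : ℂ)) * v j‖ := by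
          rw [h3, norm_mul]
      _ ≤ ∑ j, ‖((A i j : ℂ)) * v j‖ := norm_sum_le _ _
      _ ≤ ∑ _j : Fin n, C * ‖v i‖ := by
          refine Finset.sum_le_sum fun j _ => ?_
          rw [norm_mul, Complex.norm_real, Real.norm_eq_abs]
          exact mul_le_mul (hC i j) (hi j (Finset.mem_univ j)) (norm_nonneg _) hC0
      _ = (n * C) * ‖v i‖ := by
          rw [Finset.sum_const, Finset.card_univ, Fintype.card_fin, nsmul_eq_mul]; ring
  exact le_of_mul_le_mul_right h1 hm

lemma my_mulVec_apply {k : ℕ} {α : Type*} [CommRing α] (C : Matrix (Fin k) (Fin k) α)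
    (x : Fin k → α) (i : Fin k) : C.mulVec x i = ∑ j, C i j * x j := by
  simp [Matrix.mulVec, dotProduct]

lemma my_key_root_of_unity {n : ℕ} (B : Matrix (Fin n) (Fin n) ℝ)
    (hB : ∀ i j, 0 ≤ B i j) (M : ℝ)
    (hpow : ∀ k : ℕ, ∀ i j, (B ^ k) i j ≤ M)
    (μ : ℂ) (v : Fin n → ℂ) (hv : v ≠ 0)
    (heig : (B.map Complex.ofReal).mulVec v = μ • v)
    (habs : ‖μ‖ = 1) :
    ∃ k : ℕ, 0 < k ∧ k ≤ n ∧ μ ^ k = 1 := by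
  classical
  set r : Fin n → ℝ := fun i => ‖v i‖ with hrdef
  have hr0 : ∀ i, 0 ≤ r i := fun i => norm_nonneg _
  have heig' : ∀ i, ∑ j, (B i j : ℂ) * v j = μ * v i := by
    intro i
    have h2 : (B.map Complex.ofReal).mulVec v i = μ * v i := by rw [heig]; rfl
    rw [← h2]; simp [Matrix.mulVec, dotProduct]
  -- |v| ≤ B |v|
  have hrB : ∀ i, r i ≤ B.mulVec r i := by
    intro i
    have h1 : r i = ‖μ * v i‖ := by
      rw [norm_mul, habs, one_mul]
    rw [h1, ← heig' i, my_mulVec_apply]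
    calc ‖∑ j, (B i j : ℂ) * v j‖ ≤ ∑ j, ‖(B i j : ℂ) * v j‖ :=
          norm_sum_le _ _
      _ = ∑ j, B i j * r j := by
          refine Finset.sum_congr rfl fun j _ => ?_
          rw [norm_mul, Complex.norm_real, Real.norm_eq_abs, _root_.abs_of_nonneg (hB i j)]
  have hmono : ∀ (C : Matrix (Fin n) (Fin n) ℝ), (∀ i j, 0 ≤ C i j) →
      ∀ x z : Fin n → ℝ, (∀ j, x j ≤ z j) → ∀ i, C.mulVec x i ≤ C.mulVec z i := by
    intro C hC x z hxz i
    rw [my_mulVec_apply, my_mulVec_apply]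
    exact Finset.sum_le_sum fun j _ => mul_le_mul_of_nonneg_left (hxz j) (hC i j)
  have hBk : ∀ k : ℕ, ∀ i j, 0 ≤ (B ^ k) i j := by
    intro k
    induction k with
    | zero =>
      intro i j
      rw [pow_zero, Matrix.one_apply]
      split <;> norm_num
    | succ m ih =>
      intro i j
      rw [pow_succ, Matrix.mul_apply]
      exact Finset.sum_nonneg fun l _ => mul_nonneg (ih i l) (hB l j)
  set seq : ℕ → Fin n → ℝ := fun k => (B ^ k).mulVec r with hseqdef
  have hseq_succ : ∀ k, seq (k + 1) = B.mulVec (seq k) := by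
    intro k
    show (B ^ (k+1)).mulVec r = B.mulVec ((B ^ k).mulVec r)
    rw [Matrix.mulVec_mulVec, ← pow_succ']
  have hseq_mono : ∀ i, Monotone fun k => seq k i := by
    intro i
    apply monotone_nat_of_le_succ
    intro k
    have h1 : seq (k + 1) i = (B ^ k).mulVec (B.mulVec r) i := by
      show ((B ^ (k+1)).mulVec r) i = _
      rw [Matrix.mulVec_mulVec, ← pow_succ]
    rw [h1]
    exact hmono _ (hBk k) _ _ hrB i
  have hseq_le : ∀ k i, seq k i ≤ ∑ j, M * r j := by
    intro k i
    show ((B ^ k).mulVec r) i ≤ _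
    rw [my_mulVec_apply]
    exact Finset.sum_le_sum fun j _ => mul_le_mul_of_nonneg_right (hpow k i j) (hr0 j)
  have hbdd : ∀ i, BddAbove (Set.range fun k => seq k i) := by
    intro i
    exact ⟨∑ j, M * r j, by rintro x ⟨k, rfl⟩; exact hseq_le k i⟩
  set y : Fin n → ℝ := fun i => ⨆ k, seq k i with hydef
  have htend : ∀ i, Tendsto (fun k => seq k i) atTop (nhds (y i)) := fun i =>
    tendsto_atTop_ciSup (hseq_mono i) (hbdd i)
  have hfix : ∀ i, B.mulVec y i = y i := by
    intro i
    have h1 : Tendsto (fun k => B.mulVec (seq k) i) atTop (nhds (B.mulVec y i)) := by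
      simp only [my_mulVec_apply]
      exact tendsto_finset_sum _ fun j _ => Tendsto.const_mul (B i j) (htend j)
    have h2 : Tendsto (fun k => seq (k + 1) i) atTop (nhds (y i)) :=
      (htend i).comp (tendsto_add_atTop_nat 1)
    have h3 : (fun k => B.mulVec (seq k) i) = fun k => seq (k + 1) i := by
      funext k; rw [hseq_succ]
    rw [h3] at h1
    exact tendsto_nhds_unique h1 h2
  have hry : ∀ i, r i ≤ y i := by
    intro i
    have h0 : seq 0 i = r i := by
      show ((B ^ 0).mulVec r) i = r i
      rw [pow_zero, Matrix.one_mulVec]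
    calc r i = seq 0 i := h0.symm
      _ ≤ y i := le_ciSup (hbdd i) 0
  have hy0 : ∀ i, 0 ≤ y i := fun i => le_trans (hr0 i) (hry i)
  -- the extremal argument
  obtain ⟨i0, hi0⟩ : ∃ i, v i ≠ 0 := Function.ne_iff.mp hv
  have hri0 : 0 < r i0 := norm_pos_iff.mpr hi0
  have hyi0 : 0 < y i0 := lt_of_lt_of_le hri0 (hry i0)
  set F : Finset (Fin n) := Finset.univ.filter (fun i => 0 < y i) with hFdef
  have hFne : F.Nonempty := ⟨i0, by simp [hFdef, hyi0]⟩
  set c : ℝ := F.sup' hFne (fun i => r i / y i) with hcdef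
  have hrc : ∀ j, r j ≤ c * y j := by
    intro j
    rcases (hy0 j).lt_or_eq with hyj | hyj
    · have hmem : j ∈ F := by
        rw [hFdef]; exact Finset.mem_filter.mpr ⟨Finset.mem_univ _, hyj⟩
      have h1 : r j / y j ≤ c := by
        rw [hcdef]; exact Finset.le_sup' (fun i => r i / y i) hmem
      calc r j = (r j / y j) * y j := by field_simp
        _ ≤ c * y j := mul_le_mul_of_nonneg_right h1 hyj.le
    · have h2 : r j = 0 := le_antisymm (hyj ▸ hry j) (hr0 j)
      rw [h2, ← hyj, mul_zero]
  have hc0 : 0 < c := by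
    have hmem : i0 ∈ F := by
      rw [hFdef]; exact Finset.mem_filter.mpr ⟨Finset.mem_univ _, hyi0⟩
    have h1 : r i0 / y i0 ≤ c := by
      rw [hcdef]; exact Finset.le_sup' (fun i => r i / y i) hmem
    have h2 : 0 < r i0 / y i0 := div_pos hri0 hyi0
    linarith
  have hstep : ∀ i, 0 < y i → r i = c * y i →
      ∃ j, 0 < y j ∧ r j = c * y j ∧ v j / (y j : ℂ) = μ * (v i / (y i : ℂ)) := by
    intro i hyi hri
    set a : ℂ := μ * v i with hadef
    have haabs : ‖a‖ = c * y i := by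
      rw [hadef, norm_mul, habs, one_mul, ← hri]
    have hBy : ∑ j, B i j * y j = y i := by
      rw [← my_mulVec_apply]; exact hfix i
    have hupper : ∀ j, B i j * ((starRingEnd ℂ) a * v j).re ≤ B i j * (c * y i * (c * y j)) := by
      intro j
      refine mul_le_mul_of_nonneg_left ?_ (hB i j)
      calc ((starRingEnd ℂ) a * v j).re ≤ ‖(starRingEnd ℂ) a * v j‖ :=
            Complex.re_le_norm _
        _ = (c * y i) * r j := by rw [norm_mul, Complex.norm_conj, haabs]
        _ ≤ (c * y i) * (c * y j) :=
            mul_le_mul_of_nonneg_left (hrc j) (by positivity)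
    have hsum : ∑ j, B i j * ((starRingEnd ℂ) a * v j).re
        = ∑ j, B i j * (c * y i * (c * y j)) := by
      have h2 : (∑ j, (B i j : ℂ) * ((starRingEnd ℂ) a * v j)) = (starRingEnd ℂ) a * a := by
        rw [show (starRingEnd ℂ) a * a = (starRingEnd ℂ) a * (μ * v i) from by rw [hadef],
          ← heig' i, Finset.mul_sum]
        exact Finset.sum_congr rfl fun j _ => by ring
      have h3 : ∑ j, B i j * ((starRingEnd ℂ) a * v j).re = ((starRingEnd ℂ) a * a).re := by
        rw [← h2, Complex.re_sum]
        exact Finset.sum_congr rfl fun j _ => (Complex.re_ofReal_mul _ _).symm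
      have h4 : ((starRingEnd ℂ) a * a).re = (c * y i) ^ 2 := by
        rw [mul_comm, Complex.mul_conj, Complex.ofReal_re, ← Complex.sq_norm, haabs]
      have h5 : ∑ j, B i j * (c * y i * (c * y j)) = (c * y i) ^ 2 := by
        have h51 : ∑ j, B i j * (c * y i * (c * y j)) = (c * y i * c) * ∑ j, B i j * y j := by
          rw [Finset.mul_sum]
          exact Finset.sum_congr rfl fun j _ => by ring
        rw [h51, hBy]; ring
      rw [h3, h4, h5]
    have heqterms := (Finset.sum_eq_sum_iff_of_le (fun j _ => hupper j)).mp hsum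
    have hex : ∃ j, 0 < B i j * y j := by
      by_contra hcon
      push_neg at hcon
      have h6 : y i ≤ 0 := by rw [← hBy]; exact Finset.sum_nonpos fun j _ => hcon j
      linarith
    obtain ⟨j, hj⟩ := hex
    have hBij : 0 < B i j := by
      rcases mul_pos_iff.mp hj with ⟨h, _⟩ | ⟨h, _⟩
      · exact h
      · exact absurd (hB i j) (not_le.mpr h)
    have hyj : 0 < y j := by
      rcases mul_pos_iff.mp hj with ⟨_, h⟩ | ⟨h, _⟩
      · exact h
      · exact absurd (hB i j) (not_le.mpr h)
    have hre : ((starRingEnd ℂ) a * v j).re = c * y i * (c * y j) :=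
      mul_left_cancel₀ (ne_of_gt hBij) (heqterms j (Finset.mem_univ j))
    have habsz : ‖(starRingEnd ℂ) a * v j‖ = (c * y i) * r j := by
      rw [norm_mul, Complex.norm_conj, haabs]
    have hrj : r j = c * y j := by
      have hle1 : c * y i * (c * y j) ≤ (c * y i) * r j := by
        rw [← hre, ← habsz]; exact Complex.re_le_norm _
      have hcyi : 0 < c * y i := mul_pos hc0 hyi
      have h9 : c * y j ≤ r j := le_of_mul_le_mul_left hle1 hcyi
      have hle2 : r j ≤ c * y j := hrc j
      linarith
    set z : ℂ := (starRingEnd ℂ) a * v j with hzdef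
    have hzabs : ‖z‖ = z.re := by
      rw [habsz, hre, hrj]
    have him : z.im = 0 := by
      have h1 : z.re ^ 2 + z.im ^ 2 = (‖z‖) ^ 2 := by
        rw [Complex.sq_norm, Complex.normSq_apply]; ring
      have h0 : (‖z‖) ^ 2 = z.re ^ 2 := by rw [hzabs]
      have h2 : z.im ^ 2 = 0 := by linarith
      exact sq_eq_zero_iff.mp h2
    have hz : z = ((c * y i * (c * y j) : ℝ) : ℂ) := by
      apply Complex.ext
      · rw [Complex.ofReal_re]; exact hre
      · rw [Complex.ofReal_im]; exact him
    have hnormsq : ((Complex.normSq a : ℝ) : ℂ) = (((c * y i) ^ 2 : ℝ) : ℂ) := by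
      rw [← Complex.sq_norm, haabs]
    have h6 : (((c * y i) ^ 2 : ℝ) : ℂ) * v j = ((c * y i * (c * y j) : ℝ) : ℂ) * a := by
      calc (((c * y i) ^ 2 : ℝ) : ℂ) * v j = ((Complex.normSq a : ℝ) : ℂ) * v j := by
            rw [hnormsq]
        _ = (a * (starRingEnd ℂ) a) * v j := by rw [Complex.mul_conj]
        _ = a * z := by rw [hzdef]; ring
        _ = ((c * y i * (c * y j) : ℝ) : ℂ) * a := by rw [hz]; ring
    refine ⟨j, hyj, hrj, ?_⟩
    have hyiC : ((y i : ℝ) : ℂ) ≠ 0 := by exact_mod_cast ne_of_gt hyi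
    have hyjC : ((y j : ℝ) : ℂ) ≠ 0 := by exact_mod_cast ne_of_gt hyj
    have hcC : ((c : ℝ) : ℂ) ≠ 0 := by exact_mod_cast ne_of_gt hc0
    rw [hadef] at h6
    push_cast at h6
    have h8 : ((c : ℂ) ^ 2 * ((y i : ℝ) : ℂ)) * (v j * ((y i : ℝ) : ℂ))
        = ((c : ℂ) ^ 2 * ((y i : ℝ) : ℂ)) * (μ * v i * ((y j : ℝ) : ℂ)) := by
      linear_combination h6
    have hfin := mul_left_cancel₀ (mul_ne_zero (pow_ne_zero 2 hcC) hyiC) h8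
    field_simp
    linear_combination hfin
  -- iterate and pigeonhole
  have hriM0 : r i0 = c * y i0 → True := fun _ => trivial
  obtain ⟨iM, hiM, hceq⟩ := Finset.exists_mem_eq_sup' hFne (fun i => r i / y i)
  have hyiM : 0 < y iM := by
    have := hiM
    simp [hFdef] at this
    exact this
  have hriM : r iM = c * y iM := by
    have : c = r iM / y iM := hceq
    rw [this]; field_simp
  have hiter : ∀ k : ℕ, ∃ i, 0 < y i ∧ r i = c * y i ∧
      v i / (y i : ℂ) = μ ^ k * (v iM / (y iM : ℂ)) := by
    intro k
    induction k with
    | zero => exact ⟨iM, hyiM, hriM, by simp⟩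
    | succ m ih =>
      obtain ⟨i, h1, h2, h3⟩ := ih
      obtain ⟨j, g1, g2, g3⟩ := hstep i h1 h2
      refine ⟨j, g1, g2, ?_⟩
      rw [g3, h3, pow_succ]; ring
  set z0 : ℂ := v iM / (y iM : ℂ) with hz0def
  have hz0 : z0 ≠ 0 := by
    apply div_ne_zero
    · intro h
      rw [hz0def] at *
      have : r iM = 0 := by simp [hrdef, h]
      nlinarith [mul_pos hc0 hyiM]
    · exact_mod_cast ne_of_gt hyiM
  have hμ0 : μ ≠ 0 := by
    intro h
    rw [h] at habs
    simp at habs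
  set W : Finset ℂ := Finset.univ.image (fun i : Fin n => v i / (y i : ℂ)) with hWdef
  have hmaps : ∀ k ∈ Finset.range (n + 1), μ ^ k * z0 ∈ W := by
    intro k _
    obtain ⟨i, _, _, h3⟩ := hiter k
    rw [hWdef]
    exact Finset.mem_image.mpr ⟨i, Finset.mem_univ i, h3⟩
  have hcard : W.card < (Finset.range (n + 1)).card := by
    rw [Finset.card_range]
    calc W.card ≤ Finset.univ.card := Finset.card_image_le
      _ = n := by simp
      _ < n + 1 := Nat.lt_succ_self n
  obtain ⟨b1, hb1, b2, hb2, hne, heq2⟩ :=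
    Finset.exists_ne_map_eq_of_card_lt_of_maps_to hcard (fun k hk => hmaps k hk)
  have hfinal : ∀ a b : ℕ, a < b → b ≤ n → μ ^ a * z0 = μ ^ b * z0 →
      ∃ k : ℕ, 0 < k ∧ k ≤ n ∧ μ ^ k = 1 := by
    intro a b hab hbn he
    refine ⟨b - a, Nat.sub_pos_of_lt hab, le_trans (Nat.sub_le b a) hbn, ?_⟩
    have h1 : μ ^ b = μ ^ a * μ ^ (b - a) := by
      rw [← pow_add, Nat.add_sub_cancel' hab.le]
    rw [h1, mul_assoc] at he
    have h2 := mul_left_cancel₀ (pow_ne_zero a hμ0) he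
    have h3 : μ ^ (b - a) * z0 = 1 * z0 := by rw [one_mul, ← h2]
    exact mul_right_cancel₀ hz0 h3
  have hb1n : b1 ≤ n := Nat.lt_succ_iff.mp (Finset.mem_range.mp hb1)
  have hb2n : b2 ≤ n := Nat.lt_succ_iff.mp (Finset.mem_range.mp hb2)
  rcases hne.lt_or_gt with h | h
  · exact hfinal b1 b2 h hb2n heq2
  · exact hfinal b2 b1 h hb1n heq2.symm

/-- Peripheral spectrum of a bounded entrywise-nonnegative matrix semigroup is trivial. -/
theorem matrix_semigroup_peripheral_spectrum (n : ℕ) (T : ℝ → Matrix (Fin n) (Fin n) ℝ)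
    (h0 : T 0 = 1)
    (hmul : ∀ s t : ℝ, 0 ≤ s → 0 ≤ t → T (t + s) = T t * T s)
    (hpos : ∀ t : ℝ, 0 ≤ t → ∀ i j, 0 ≤ T t i j)
    (hbdd : ∃ M : ℝ, ∀ t : ℝ, 0 ≤ t → ∀ i j, |T t i j| ≤ M) :
    ∀ t : ℝ, 0 ≤ t →
      ∀ lam ∈ spectrum ℂ ((T t).map (Complex.ofReal)), ‖lam‖ = 1 → lam = 1 := by
  obtain ⟨M, hM⟩ := hbdd
  intro t ht lam hlam hlabs
  set N := Nat.factorial n with hN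
  have hN0 : 0 < N := Nat.factorial_pos n
  set s := t / N with hs
  have hs0 : 0 ≤ s := by
    rw [hs]; positivity
  have hTpow : ∀ k : ℕ, T (k * s) = (T s) ^ k := by
    intro k
    induction k with
    | zero => simpa using h0
    | succ m ih =>
      have h1 : ((m + 1 : ℕ) : ℝ) * s = (m : ℝ) * s + s := by push_cast; ring
      have h2 : (0 : ℝ) ≤ (m : ℝ) * s := by positivity
      rw [h1, hmul s ((m : ℝ) * s) hs0 h2, ih, pow_succ]
  have hts : (N : ℝ) * s = t := by
    rw [hs]
    field_simp
  have hTt : T t = (T s) ^ N := by rw [← hts, hTpow]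
  have hmap : (T t).map Complex.ofReal = ((T s).map Complex.ofReal) ^ N := by
    rw [hTt, my_pow_map_ofReal]
  rw [hmap, spectrum.map_pow_of_pos _ hN0] at hlam
  obtain ⟨μ, hμmem, hμpow0⟩ := hlam
  have hμpow : μ ^ N = lam := hμpow0
  obtain ⟨v, hv, heig⟩ := my_eigvec_of_mem_spectrum _ _ hμmem
  -- entry bounds for all powers of T s
  set M' := max M 1 with hM'
  have hpow' : ∀ k : ℕ, ∀ i j, |((T s) ^ k) i j| ≤ M' := by
    intro k i j
    cases k with
    | zero =>
      rw [pow_zero, Matrix.one_apply]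
      split
      · simp [hM']
      · simp [hM']
    | succ m =>
      rw [← hTpow]
      have hks : (0 : ℝ) ≤ ((m + 1 : ℕ) : ℝ) * s := by positivity
      exact le_trans (hM _ hks i j) (le_max_left _ _)
  -- eigen equation for powers
  have heigk : ∀ k : ℕ, (((T s) ^ k).map Complex.ofReal).mulVec v = (μ ^ k) • v := by
    intro k
    induction k with
    | zero => simp [my_pow_map_ofReal]
    | succ m ih =>
      rw [my_pow_map_ofReal, pow_succ, ← Matrix.mulVec_mulVec, ← my_pow_map_ofReal, heig,
        Matrix.mulVec_smul, ih, smul_smul, pow_succ]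
      congr 1
      ring
  -- |μ| ≤ 1
  have hμle : ‖μ‖ ≤ 1 := by
    by_contra hcon
    push_neg at hcon
    obtain ⟨k, hk⟩ := pow_unbounded_of_one_lt ((n : ℝ) * M') hcon
    have h1 : ‖μ ^ k‖ ≤ (n : ℝ) * M' :=
      my_abs_eig_le _ M' (hpow' k) _ v hv (heigk k)
    rw [norm_pow] at h1
    linarith
  have hμ1 : ‖μ‖ = 1 := by
    rcases lt_or_eq_of_le hμle with h | h
    · exfalso
      have h1 : ‖μ ^ N‖ < 1 :=
        by rw [norm_pow]; exact pow_lt_one₀ (norm_nonneg _) h hN0.ne'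
      rw [hμpow, hlabs] at h1
      exact lt_irrefl 1 h1
    · exact h
  -- apply the key lemma
  have hTsk : ∀ k : ℕ, ∀ i j, ((T s) ^ k) i j ≤ M' :=
    fun k i j => le_trans (le_abs_self _) (hpow' k i j)
  obtain ⟨k, hk0, hkn, hμk⟩ := my_key_root_of_unity (T s) (hpos s hs0) M' hTsk μ v hv heig hμ1
  have hdvd : k ∣ N := Nat.dvd_factorial hk0 hkn
  rw [← hμpow, ← Nat.mul_div_cancel' hdvd, pow_mul, hμk, one_pow]
end

section
/- Let B be an n×n real matrix with nonnegative entries that is power bounded (sup_k ‖B^k‖ < ∞) and has spectral radius 1. Then every eigenvalue λ of B with |λ| = 1 is a root of unity, and moreover λ^{n!} = 1. -/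
open Matrix Finset Filter

private lemma re_eq_abs_aux {z : ℂ} (h : z.re = ‖z‖) :
    z = (‖z‖ : ℂ) := by
  have h2 : ‖z‖ ^ 2 = z.re * z.re + z.im * z.im := by
    rw [Complex.sq_norm, Complex.normSq_apply]
  have h3 : z.im * z.im = 0 := by
    rw [← h, pow_two] at h2
    linarith
  have him : z.im = 0 := mul_self_eq_zero.mp h3
  apply Complex.ext
  · rw [Complex.ofReal_re]; exact h
  · rw [Complex.ofReal_im]; exact him

/-- Unimodular eigenvalues of a power-bounded nonnegative matrix with spectral
radius 1 are roots of unity of order dividing n!. -/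
theorem nonneg_matrix_peripheral_roots_of_unity (n : ℕ) (B : Matrix (Fin n) (Fin n) ℝ)
    (hpos : ∀ i j, 0 ≤ B i j)
    (hpb : ∃ M : ℝ, ∀ k : ℕ, ∀ i j, |(B ^ k) i j| ≤ M)
    (hr : spectralRadius ℂ (B.map (Complex.ofReal)) = 1) :
    ∀ lam ∈ spectrum ℂ (B.map (Complex.ofReal)), ‖lam‖ = 1 →
      (∃ m : ℕ, 0 < m ∧ lam ^ m = 1) ∧ lam ^ (Nat.factorial n) = 1 := by
  intro lam hlam habs
  obtain ⟨m, hm0, hmn, hm1⟩ : ∃ m : ℕ, 0 < m ∧ m ≤ n ∧ lam ^ m = 1 := by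
    -- extract an eigenvector
    set A := B.map (Complex.ofReal) with hA
    have hnu : ¬ IsUnit ((algebraMap ℂ (Matrix (Fin n) (Fin n) ℂ)) lam - A) :=
      spectrum.mem_iff.mp hlam
    have hdet : ((algebraMap ℂ (Matrix (Fin n) (Fin n) ℂ)) lam - A).det = 0 := by
      by_contra h
      exact hnu ((Matrix.isUnit_iff_isUnit_det _).mpr (isUnit_iff_ne_zero.mpr h))
    obtain ⟨x, hx0, hxe⟩ := (Matrix.exists_mulVec_eq_zero_iff).mpr hdet
    have heig : A *ᵥ x = lam • x := by
      have := hxe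
      rw [Matrix.sub_mulVec, sub_eq_zero] at this
      rw [← this, Algebra.algebraMap_eq_smul_one, Matrix.smul_mulVec,
        Matrix.one_mulVec]
    have heig' : ∀ i, ∑ j, (B i j : ℂ) * x j = lam * x i := by
      intro i
      have := congrFun heig i
      simpa [Matrix.mulVec, dotProduct, Matrix.map_apply, hA] using this
    set y : Fin n → ℝ := fun i => ‖x i‖ with hy
    have hy0 : ∀ i, 0 ≤ y i := fun i => (norm_nonneg _)
    -- subinvariance: y ≤ B y
    have hBy : ∀ i, y i ≤ ∑ j, B i j * y j := by
      intro i
      have h1 : y i = ‖∑ j, (B i j : ℂ) * x j‖ := by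
        rw [heig' i, norm_mul, habs, one_mul]
      rw [h1]
      calc ‖∑ j, (B i j : ℂ) * x j‖
          ≤ ∑ j, ‖(B i j : ℂ) * x j‖ := norm_sum_le _ _
        _ = ∑ j, B i j * y j := by
            refine Finset.sum_congr rfl fun j _ => ?_
            rw [norm_mul, Complex.norm_of_nonneg (hpos i j)]
    -- powers are nonneg
    have hpown : ∀ k (i j : Fin n), 0 ≤ (B ^ k) i j := by
      intro k
      induction k with
      | zero =>
        intro i j
        rw [pow_zero, Matrix.one_apply]
        split_ifs <;> norm_num
      | succ k ih =>
        intro i j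
        rw [pow_succ, Matrix.mul_apply]
        exact Finset.sum_nonneg fun l _ => mul_nonneg (ih i l) (hpos l j)
    set s : ℕ → Fin n → ℝ := fun k i => ((B ^ k) *ᵥ y) i with hs
    have hsval : ∀ k i, s k i = ∑ j, (B ^ k) i j * y j := by
      intro k i
      show ((B ^ k) *ᵥ y) i = _
      simp [Matrix.mulVec, dotProduct]
    have hs0 : ∀ i, s 0 i = y i := by
      intro i
      show ((B ^ 0) *ᵥ y) i = y i
      rw [pow_zero, Matrix.one_mulVec]
    have hsrec : ∀ k i, s (k + 1) i = ∑ j, B i j * s k j := by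
      intro k i
      show ((B ^ (k + 1)) *ᵥ y) i = ∑ j, B i j * ((B ^ k) *ᵥ y) j
      rw [pow_succ', ← Matrix.mulVec_mulVec]
      simp [Matrix.mulVec, dotProduct]
    have hsrec2 : ∀ k i, s (k + 1) i = ∑ j, (B ^ k) i j * (∑ l, B j l * y l) := by
      intro k i
      show ((B ^ (k + 1)) *ᵥ y) i = _
      rw [pow_succ, ← Matrix.mulVec_mulVec]
      simp [Matrix.mulVec, dotProduct]
    have hmono : ∀ i, Monotone fun k => s k i := by
      intro i
      apply monotone_nat_of_le_succ
      intro k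
      rw [hsrec2 k i, hsval k i]
      exact Finset.sum_le_sum fun j _ =>
        mul_le_mul_of_nonneg_left (hBy j) (hpown k i j)
    obtain ⟨C, hC⟩ := hpb
    have hbdd : ∀ k i, s k i ≤ C * ∑ j, y j := by
      intro k i
      rw [hsval k i, Finset.mul_sum]
      exact Finset.sum_le_sum fun j _ =>
        mul_le_mul_of_nonneg_right (le_trans (le_abs_self _) (hC k i j)) (hy0 j)
    have hBdd : ∀ i, BddAbove (Set.range fun k => s k i) := by
      intro i
      exact ⟨C * ∑ j, y j, by rintro _ ⟨k, rfl⟩; exact hbdd k i⟩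
    set t : Fin n → ℝ := fun i => ⨆ k, s k i with ht
    have htend : ∀ i, Tendsto (fun k => s k i) atTop (nhds (t i)) := fun i =>
      tendsto_atTop_ciSup (hmono i) (hBdd i)
    have hts : ∀ k i, s k i ≤ t i := fun k i => le_ciSup (hBdd i) k
    have hty : ∀ i, y i ≤ t i := fun i => (hs0 i) ▸ hts 0 i
    have ht0 : ∀ i, 0 ≤ t i := fun i => le_trans (hy0 i) (hty i)
    have htfix : ∀ i, ∑ j, B i j * t j = t i := by
      intro i
      have h1 : Tendsto (fun k => ∑ j, B i j * s k j) atTop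
          (nhds (∑ j, B i j * t j)) :=
        tendsto_finset_sum _ fun j _ => (htend j).const_mul _
      have h2 : Tendsto (fun k => s (k + 1) i) atTop (nhds (t i)) :=
        (htend i).comp (Filter.tendsto_add_atTop_nat 1)
      have h3 : (fun k => ∑ j, B i j * s k j) = fun k => s (k + 1) i :=
        funext fun k => (hsrec k i).symm
      rw [h3] at h1
      exact tendsto_nhds_unique h1 h2
    -- the normalized eigenvector
    set w : Fin n → ℂ := fun i => x i / (t i : ℂ) with hw
    have hxw : ∀ j, x j = (t j : ℂ) * w j := by
      intro j
      by_cases h : t j = 0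
      · have hxj : x j = 0 := by
          have : ‖x j‖ ≤ 0 := h ▸ hty j
          exact norm_eq_zero.mp (le_antisymm this (norm_nonneg _))
        simp [hw, hxj]
      · have : (t j : ℂ) ≠ 0 := by exact_mod_cast h
        simp only [hw]
        field_simp
    have hwx0 : ∀ j, x j ≠ 0 → w j ≠ 0 := by
      intro j hj h
      exact hj (by rw [hxw j, h, mul_zero])
    obtain ⟨iw, hiw⟩ : ∃ i, x i ≠ 0 := Function.ne_iff.mp hx0
    obtain ⟨i0, -, hmax⟩ :=
      Finset.exists_max_image Finset.univ (fun i => ‖w i‖)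
        ⟨iw, Finset.mem_univ iw⟩
    set Mw : ℝ := ‖w i0‖ with hMw
    have hmax' : ∀ j, ‖w j‖ ≤ Mw := fun j => hmax j (Finset.mem_univ j)
    have hMw0 : 0 < Mw :=
      lt_of_lt_of_le (norm_pos_iff.mpr (hwx0 iw hiw)) (hmax' iw)
    -- key step : the set of maximal values is invariant under mult by lam
    have hstep : ∀ i, ‖w i‖ = Mw →
        ∃ j, ‖w j‖ = Mw ∧ w j = lam * w i := by
      intro i hi
      have hwi0 : w i ≠ 0 := by
        intro h; rw [h, norm_zero] at hi; exact hMw0.ne hi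
      have hxi0 : x i ≠ 0 := by
        intro h; exact hwi0 (by simp [hw, h])
      have hti : 0 < t i := lt_of_lt_of_le (norm_pos_iff.mpr hxi0) (hty i)
      have hE : ∑ j, ((B i j * t j : ℝ) : ℂ) * w j = lam * ((t i : ℂ) * w i) := by
        calc ∑ j, ((B i j * t j : ℝ) : ℂ) * w j = ∑ j, (B i j : ℂ) * x j := by
              refine Finset.sum_congr rfl fun j _ => ?_
              rw [hxw j]; push_cast; ring
          _ = lam * x i := heig' i
          _ = lam * ((t i : ℂ) * w i) := by rw [hxw i]
      set u : ℂ := lam * w i with hu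
      have huabs : ‖u‖ = Mw := by
        rw [hu, norm_mul, habs, one_mul, hi]
      set v : ℂ := (starRingEnd ℂ) u / (Mw : ℂ) with hv
      have hMwC : (Mw : ℂ) ≠ 0 := by exact_mod_cast hMw0.ne'
      have hvu : v * u = (Mw : ℂ) := by
        rw [hv, div_mul_eq_mul_div, mul_comm, Complex.mul_conj]
        have : Complex.normSq u = Mw ^ 2 := by rw [← Complex.sq_norm, huabs]
        rw [this]
        push_cast
        field_simp
      have hvabs : ‖v‖ = 1 := by
        rw [hv, norm_div, Complex.norm_conj, huabs, Complex.norm_real,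
          Real.norm_of_nonneg hMw0.le, div_self hMw0.ne']
      have hvw : ∀ j, ‖v * w j‖ ≤ Mw := by
        intro j; rw [norm_mul, hvabs, one_mul]; exact hmax' j
      have hle : ∀ j ∈ Finset.univ, (B i j * t j) * (v * w j).re ≤ (B i j * t j) * Mw :=
        fun j _ => mul_le_mul_of_nonneg_left
          (le_trans (Complex.re_le_norm _) (hvw j))
          (mul_nonneg (hpos i j) (ht0 j))
      have hsumeq : ∑ j, (B i j * t j) * (v * w j).re = ∑ j, (B i j * t j) * Mw := by
        have lhs1 : ∑ j, (B i j * t j) * (v * w j).re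
            = (v * ∑ j, ((B i j * t j : ℝ) : ℂ) * w j).re := by
          rw [Finset.mul_sum, Complex.re_sum]
          refine Finset.sum_congr rfl fun j _ => ?_
          rw [show v * (((B i j * t j : ℝ) : ℂ) * w j)
              = ((B i j * t j : ℝ) : ℂ) * (v * w j) by ring,
            Complex.re_ofReal_mul]
        have lhs2 : (v * ∑ j, ((B i j * t j : ℝ) : ℂ) * w j).re = t i * Mw := by
          rw [hE, show v * (lam * ((t i : ℂ) * w i)) = (t i : ℂ) * (v * u) by
            rw [hu]; ring, hvu]
          push_cast
          simp
        have rhs1 : ∑ j, (B i j * t j) * Mw = t i * Mw := by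
          rw [← Finset.sum_mul, htfix i]
        rw [lhs1, lhs2, rhs1]
      have heach := (Finset.sum_eq_sum_iff_of_le hle).mp hsumeq
      obtain ⟨j, hj⟩ : ∃ j, 0 < B i j * t j := by
        by_contra h
        push_neg at h
        have hz : ∀ j ∈ Finset.univ, B i j * t j = 0 := fun j _ =>
          le_antisymm (h j) (mul_nonneg (hpos i j) (ht0 j))
        have : t i = 0 := by rw [← htfix i]; exact Finset.sum_eq_zero hz
        exact hti.ne' this
      have h5 : (v * w j).re = Mw :=
        mul_left_cancel₀ hj.ne' (heach j (Finset.mem_univ j))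
      have h7 : ‖v * w j‖ = Mw :=
        le_antisymm (hvw j) (h5 ▸ Complex.re_le_norm _)
      have h8 : v * w j = (Mw : ℂ) := by
        have := re_eq_abs_aux (z := v * w j) (by rw [h7, h5])
        rw [this, h7]
      have hv0 : v ≠ 0 := by
        intro h; rw [h, norm_zero] at hvabs; norm_num at hvabs
      have hwj : w j = lam * w i := by
        have : v * w j = v * u := by rw [h8, hvu]
        rw [← hu]
        exact mul_left_cancel₀ hv0 this
      exact ⟨j, by rw [hwj, norm_mul, habs, one_mul, hi], hwj⟩
    -- iterate
    have horbit : ∀ k : ℕ, ∃ i, ‖w i‖ = Mw ∧ w i = lam ^ k * w i0 := by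
      intro k
      induction k with
      | zero => exact ⟨i0, rfl, by simp⟩
      | succ k ih =>
        obtain ⟨i, hi, hwi⟩ := ih
        obtain ⟨j, hj, hwj⟩ := hstep i hi
        exact ⟨j, hj, by rw [hwj, hwi, pow_succ]; ring⟩
    -- pigeonhole
    have hmapsto : ∀ k : Fin (n + 1), k ∈ Finset.univ →
        lam ^ (k : ℕ) * w i0 ∈ Finset.image w Finset.univ := by
      intro k _
      obtain ⟨i, -, hwi⟩ := horbit (k : ℕ)
      exact Finset.mem_image.mpr ⟨i, Finset.mem_univ i, hwi⟩
    have hcard : (Finset.image w Finset.univ).card < (Finset.univ : Finset (Fin (n + 1))).card := by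
      calc (Finset.image w Finset.univ).card ≤ (Finset.univ : Finset (Fin n)).card :=
            Finset.card_image_le
        _ = n := by simp
        _ < n + 1 := Nat.lt_succ_self n
        _ = (Finset.univ : Finset (Fin (n + 1))).card := by simp
    obtain ⟨a, -, b, -, hab, hfab⟩ :=
      Finset.exists_ne_map_eq_of_card_lt_of_maps_to hcard hmapsto
    have hwi00 : w i0 ≠ 0 := by
      intro h; rw [hMw, h, norm_zero] at hMw0; exact lt_irrefl _ hMw0
    have hlam0 : lam ≠ 0 := by
      intro h; rw [h, norm_zero] at habs; norm_num at habs
    have hpow : lam ^ (a : ℕ) = lam ^ (b : ℕ) := mul_right_cancel₀ hwi00 hfab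
    have key : ∀ p q : Fin (n + 1), (p : ℕ) < (q : ℕ) →
        lam ^ (p : ℕ) = lam ^ (q : ℕ) →
        ∃ m : ℕ, 0 < m ∧ m ≤ n ∧ lam ^ m = 1 := by
      intro p q hpq hpow
      refine ⟨(q : ℕ) - (p : ℕ), Nat.sub_pos_of_lt hpq, ?_, ?_⟩
      · exact le_trans (Nat.sub_le _ _) (Nat.lt_succ_iff.mp q.isLt)
      · rw [pow_sub₀ lam hlam0 hpq.le, ← hpow,
          mul_inv_cancel₀ (pow_ne_zero _ hlam0)]
    rcases Ne.lt_or_gt hab with h | h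
    · exact key a b (by exact_mod_cast h) hpow
    · exact key b a (by exact_mod_cast h) hpow.symm
  refine ⟨⟨m, hm0, hm1⟩, ?_⟩
  obtain ⟨c, hc⟩ := Nat.dvd_factorial hm0 hmn
  rw [hc, pow_mul, hm1, one_pow]
end

section
/- Let S be an n×n real matrix that is power bounded, has determinant 1, and whose only eigenvalue of modulus 1 (over ℂ) is 1. Then S is the identity matrix. -/
open Matrix Polynomial

private lemma pb_abs_multiset_prod_le_one (s : Multiset ℂ)
    (h : ∀ x ∈ s, ‖x‖ ≤ 1) : ‖s.prod‖ ≤ 1 := by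
  induction s using Multiset.induction with
  | empty => simp
  | cons a s ih =>
    rw [Multiset.prod_cons, norm_mul]
    calc ‖a‖ * ‖s.prod‖ ≤ 1 * 1 :=
          mul_le_mul (h a (Multiset.mem_cons_self a s))
            (ih fun x hx => h x (Multiset.mem_cons_of_mem hx))
            (norm_nonneg _) zero_le_one
      _ = 1 := one_mul 1

private lemma pb_charpoly_eval {n : ℕ} (T : Matrix (Fin n) (Fin n) ℂ) (lam : ℂ) :
    T.charpoly.eval lam = (lam • (1 : Matrix (Fin n) (Fin n) ℂ) - T).det := by
  rw [Matrix.charpoly]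
  rw [show (Matrix.charmatrix T).det.eval lam
      = ((Polynomial.evalRingHom lam).mapMatrix (Matrix.charmatrix T)).det from
    (RingHom.map_det (Polynomial.evalRingHom lam) (Matrix.charmatrix T))]
  congr 1
  ext i j
  by_cases h : i = j <;>
    simp [h, Matrix.charmatrix_apply, Matrix.smul_apply, Matrix.one_apply,
      Matrix.diagonal_apply, Matrix.sub_apply]

private lemma pb_mem_spectrum_iff_root {n : ℕ} (T : Matrix (Fin n) (Fin n) ℂ) (lam : ℂ) :
    lam ∈ spectrum ℂ T ↔ T.charpoly.IsRoot lam := by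
  rw [spectrum.mem_iff, Matrix.isUnit_iff_isUnit_det, isUnit_iff_ne_zero, not_ne_iff,
    Polynomial.IsRoot, pb_charpoly_eval, Algebra.algebraMap_eq_smul_one]

/-- A power-bounded real matrix with determinant 1 whose only unimodular
eigenvalue is 1 is the identity. -/
theorem power_bounded_det_one_is_id (n : ℕ) (S : Matrix (Fin n) (Fin n) ℝ)
    (hpb : ∃ M : ℝ, ∀ k : ℕ, ∀ i j, |(S ^ k) i j| ≤ M)
    (hdet : S.det = 1)
    (hspec : ∀ lam ∈ spectrum ℂ (S.map (Complex.ofReal)), ‖lam‖ = 1 → lam = 1) :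
    S = 1 := by
  rcases Nat.eq_zero_or_pos n with hn | hn
  · subst hn; ext i j; exact i.elim0
  haveI : Nonempty (Fin n) := ⟨⟨0, hn⟩⟩
  obtain ⟨M, hM⟩ := hpb
  set T : Matrix (Fin n) (Fin n) ℂ := S.map Complex.ofReal with hTdef
  have hmap : T = (Complex.ofRealHom : ℝ →+* ℂ).mapMatrix S := rfl
  have hTpow : ∀ k : ℕ, T ^ k = (S ^ k).map (Complex.ofRealHom : ℝ →+* ℂ) := by
    intro k
    rw [hmap, ← map_pow]
    rfl
  have hTabs : ∀ k : ℕ, ∀ i j, ‖(T ^ k) i j‖ ≤ M := by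
    intro k i j
    rw [hTpow k]
    simpa [Matrix.map_apply] using hM k i j
  -- all roots of the charpoly have modulus at most 1
  have hroots_le : ∀ lam ∈ T.charpoly.roots, ‖lam‖ ≤ 1 := by
    intro lam hlam
    have hroot : T.charpoly.IsRoot lam := (Polynomial.mem_roots'.1 hlam).2
    have hdet0 : (lam • (1 : Matrix (Fin n) (Fin n) ℂ) - T).det = 0 := by
      rw [← pb_charpoly_eval]; exact hroot
    obtain ⟨v, hv0, hveq⟩ := (Matrix.exists_mulVec_eq_zero_iff).2 hdet0
    have hTv : T.mulVec v = lam • v := by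
      have h1 := hveq
      rw [Matrix.sub_mulVec, Matrix.smul_mulVec, Matrix.one_mulVec, sub_eq_zero] at h1
      exact h1.symm
    have hTkv : ∀ k : ℕ, (T ^ k).mulVec v = (lam ^ k) • v := by
      intro k
      induction k with
      | zero => simp [Matrix.one_mulVec]
      | succ k ih =>
        rw [pow_succ', ← Matrix.mulVec_mulVec, ih, Matrix.mulVec_smul, hTv, smul_smul,
          pow_succ', mul_comm]
    obtain ⟨i, hvi⟩ : ∃ i, v i ≠ 0 := by
      by_contra h
      push_neg at h
      exact hv0 (funext fun i => h i)
    set C : ℝ := ∑ l, ‖v l‖ with hC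
    have hbound : ∀ k : ℕ, ‖lam‖ ^ k * ‖v i‖ ≤ M * C := by
      intro k
      have h1 : ((T ^ k).mulVec v) i = lam ^ k * v i := by
        rw [hTkv k]; simp [Pi.smul_apply, smul_eq_mul]
      have h2 : ‖((T ^ k).mulVec v) i‖ ≤ M * C := by
        rw [Matrix.mulVec, dotProduct]
        calc ‖∑ l, (T ^ k) i l * v l‖
            ≤ ∑ l, ‖(T ^ k) i l * v l‖ := by
              exact norm_sum_le _ _
          _ ≤ ∑ l, M * ‖v l‖ := by
              refine Finset.sum_le_sum fun l _ => ?_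
              rw [norm_mul]
              exact mul_le_mul_of_nonneg_right (hTabs k i l) (norm_nonneg _)
          _ = M * C := by rw [hC, Finset.mul_sum]
      rw [h1, norm_mul, norm_pow] at h2
      exact h2
    by_contra hgt
    push_neg at hgt
    obtain ⟨k, hk⟩ := pow_unbounded_of_one_lt ((M * C) / ‖v i‖) hgt
    have hvipos : 0 < ‖v i‖ := by
      simpa [norm_pos_iff] using hvi
    have := hbound k
    rw [div_lt_iff₀ hvipos] at hk
    linarith
  -- determinant over ℂ
  have hdetT : T.det = 1 := by
    rw [hmap, ← RingHom.map_det, hdet]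
    simp
  have hprod : T.charpoly.roots.prod = 1 := by
    rw [← Matrix.det_eq_prod_roots_charpoly, hdetT]
  -- every root equals 1
  have hroots1 : ∀ lam ∈ T.charpoly.roots, lam = 1 := by
    intro lam hlam
    have hroot : T.charpoly.IsRoot lam := (Polynomial.mem_roots'.1 hlam).2
    have hmem : lam ∈ spectrum ℂ (S.map Complex.ofReal) :=
      (pb_mem_spectrum_iff_root T lam).2 hroot
    refine hspec lam hmem ?_
    have h1 : ‖lam‖ ≤ 1 := hroots_le lam hlam
    have hP : ‖(T.charpoly.roots.erase lam).prod‖ ≤ 1 :=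
      pb_abs_multiset_prod_le_one _ fun x hx =>
        hroots_le x (Multiset.mem_of_mem_erase hx)
    have h2 : ‖lam‖ * ‖(T.charpoly.roots.erase lam).prod‖ = 1 := by
      rw [← norm_mul, Multiset.prod_erase hlam, hprod, norm_one]
    nlinarith [norm_nonneg lam, norm_nonneg (T.charpoly.roots.erase lam).prod]
  -- the characteristic polynomial is (X - 1)^n
  have hsplits : T.charpoly.Splits := IsAlgClosed.splits _
  have hcard : Multiset.card T.charpoly.roots = n := by
    rw [Polynomial.splits_iff_card_roots.1 hsplits, Matrix.charpoly_natDegree_eq_dim,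
      Fintype.card_fin]
  have hroots_eq : T.charpoly.roots = Multiset.replicate n 1 :=
    Multiset.eq_replicate.2 ⟨hcard, hroots1⟩
  have hcp : T.charpoly = (X - C 1) ^ n := by
    have h := hsplits.eq_prod_roots_of_monic T.charpoly_monic
    rw [h, hroots_eq, Multiset.map_replicate, Multiset.prod_replicate]
  -- Cayley-Hamilton over ℂ
  have hTn : (T - 1) ^ n = 0 := by
    have h0 := T.aeval_self_charpoly
    rw [hcp] at h0
    simpa using h0
  -- transfer nilpotency to ℝ
  have hSn : (S - 1) ^ n = 0 := by
    have hmapn : (Complex.ofRealHom : ℝ →+* ℂ).mapMatrix ((S - 1) ^ n) = 0 := by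
      rw [map_pow, map_sub,
        show (Complex.ofRealHom : ℝ →+* ℂ).mapMatrix (1 : Matrix (Fin n) (Fin n) ℝ) = 1 from
          map_one _, ← hmap, hTn]
    ext i j
    have := congrArg (fun A => A i j) hmapn
    simp only [RingHom.mapMatrix_apply, Matrix.map_apply, Matrix.zero_apply] at this
    rw [Matrix.zero_apply]
    have h2 : ((((S - 1) ^ n) i j : ℝ) : ℂ) = 0 := this
    exact_mod_cast h2
  -- final step: the nilpotent part must vanish by power boundedness
  by_contra hne
  have hNne : S - 1 ≠ 0 := fun h => hne (by rwa [sub_eq_zero] at h)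
  set N : Matrix (Fin n) (Fin n) ℝ := S - 1 with hNdef
  have hSN1 : S = N + 1 := by rw [hNdef]; abel
  have hex : ∃ t, N ^ t = 0 := ⟨n, hSn⟩
  have ht0 : N ^ Nat.find hex = 0 := Nat.find_spec hex
  have ht2 : 2 ≤ Nat.find hex := by
    by_contra hlt
    push_neg at hlt
    have h01 : Nat.find hex = 0 ∨ Nat.find hex = 1 := by omega
    rcases h01 with h | h
    · rw [h, pow_zero] at ht0
      exact one_ne_zero ht0
    · rw [h, pow_one] at ht0
      exact hNne ht0
  set s : ℕ := Nat.find hex - 2 with hs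
  have hs1 : N ^ (s + 1) ≠ 0 := Nat.find_min hex (by omega)
  have hs2 : N * N ^ (s + 1) = 0 := by
    have h2 : N * N ^ (s + 1) = N ^ (s + 2) := (pow_succ' N (s + 1)).symm
    have h3 : s + 2 = Nat.find hex := by omega
    rw [h2, h3]; exact ht0
  have hSNs1 : S * N ^ (s + 1) = N ^ (s + 1) := by
    rw [hSN1, add_mul, one_mul, hs2, zero_add]
  have hSNs : S * N ^ s = N ^ s + N ^ (s + 1) := by
    rw [hSN1, add_mul, one_mul, ← pow_succ', add_comm]
  have hkey : ∀ k : ℕ, S ^ k * N ^ s = N ^ s + (k : ℝ) • N ^ (s + 1) := by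
    intro k
    induction k with
    | zero => simp
    | succ k ih =>
      rw [pow_succ', mul_assoc, ih, mul_add, hSNs, mul_smul_comm, hSNs1]
      push_cast
      rw [add_smul, one_smul]
      abel
  obtain ⟨i, j, hij⟩ : ∃ i j, (N ^ (s + 1)) i j ≠ 0 := by
    by_contra h
    push_neg at h
    exact hs1 (Matrix.ext fun i j => h i j)
  set C : ℝ := ∑ l, |(N ^ s) l j| with hC
  have hbd : ∀ k : ℕ, |(N ^ s) i j + (k : ℝ) * (N ^ (s + 1)) i j| ≤ M * C := by
    intro k
    have h1 : (S ^ k * N ^ s) i j = (N ^ s) i j + (k : ℝ) * (N ^ (s + 1)) i j := by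
      rw [hkey k]
      simp [Matrix.add_apply, Matrix.smul_apply, smul_eq_mul]
    rw [← h1]
    calc |(S ^ k * N ^ s) i j| = |∑ l, (S ^ k) i l * (N ^ s) l j| := by
          rw [Matrix.mul_apply]
      _ ≤ ∑ l, |(S ^ k) i l * (N ^ s) l j| := Finset.abs_sum_le_sum_abs _ _
      _ ≤ ∑ l, M * |(N ^ s) l j| := by
          refine Finset.sum_le_sum fun l _ => ?_
          rw [abs_mul]
          exact mul_le_mul_of_nonneg_right (hM k i l) (abs_nonneg _)
      _ = M * C := by rw [hC, Finset.mul_sum]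
  have hbpos : 0 < |(N ^ (s + 1)) i j| := abs_pos.2 hij
  obtain ⟨k, hk⟩ := exists_nat_gt ((M * C + |(N ^ s) i j|) / |(N ^ (s + 1)) i j|)
  have hb := hbd k
  have habs : (k : ℝ) * |(N ^ (s + 1)) i j| ≤ M * C + |(N ^ s) i j| := by
    have h3 : |(k : ℝ) * (N ^ (s + 1)) i j| ≤
        |(N ^ s) i j + (k : ℝ) * (N ^ (s + 1)) i j| + |(N ^ s) i j| := by
      have := abs_add_le ((N ^ s) i j + (k : ℝ) * (N ^ (s + 1)) i j) (-(N ^ s) i j)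
      simpa [abs_neg] using this
    rw [abs_mul, Nat.abs_cast] at h3
    linarith
  rw [div_lt_iff₀ hbpos] at hk
  linarith
end

section
/- Let T : [0,∞) → Matrix (Fin n) (Fin n) ℝ be a semigroup taking values in the stochastic matrices (nonnegative entries, each row summing to 1) such that T(t₀) is invertible for some t₀ > 0. Then T is continuous. -/
open Finset Matrix

lemma abs_det_le_sum (n : ℕ) (P : Matrix (Fin n) (Fin n) ℝ) :
    |P.det| ≤ ∑ σ : Equiv.Perm (Fin n), ∏ k, |P k (σ k)| := by
  rw [← Matrix.det_transpose, Matrix.det_apply']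
  refine (Finset.abs_sum_le_sum_abs _ _).trans (Finset.sum_le_sum fun σ _ => ?_)
  rw [abs_mul, Finset.abs_prod]
  rcases Int.units_eq_one_or (Equiv.Perm.sign σ) with h | h <;>
    simp [h, Matrix.transpose_apply]

-- injectivity of restriction of a permutation to the complement of a point
lemma perm_restrict_inj (n : ℕ) (i : Fin n) :
    Function.Injective (fun (σ : Equiv.Perm (Fin n)) (k : {k : Fin n // k ≠ i}) => σ k.1) := by
  intro σ τ h
  have h' : ∀ k : Fin n, k ≠ i → σ k = τ k := fun k hk => congrFun h ⟨k, hk⟩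
  apply Equiv.ext; intro k
  rcases eq_or_ne k i with rfl | hk
  · by_contra hne
    have hk2 : τ.symm (σ k) ≠ k := fun he => hne (by simpa [he] using (τ.apply_symm_apply (σ k)).symm)
    have h3 := h' (τ.symm (σ k)) hk2
    rw [τ.apply_symm_apply] at h3
    exact hk2 (σ.injective h3)
  · exact h' k hk

lemma sum_perm_prod_erase_le (n : ℕ) (P : Matrix (Fin n) (Fin n) ℝ)
    (hpos : ∀ i j, 0 ≤ P i j) (hrow : ∀ i, ∑ j, P i j ≤ 1) (i : Fin n) :
    ∑ σ : Equiv.Perm (Fin n), ∏ k ∈ Finset.univ.erase i, P k (σ k) ≤ 1 := by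
  have hconv : ∀ σ : Equiv.Perm (Fin n),
      ∏ k ∈ Finset.univ.erase i, P k (σ k)
        = ∏ k : {k : Fin n // k ≠ i}, P k.1 (σ k.1) := by
    intro σ
    rw [← Finset.prod_subtype (Finset.univ.erase i) (fun x => by simp) (fun k => P k (σ k))]
  calc ∑ σ : Equiv.Perm (Fin n), ∏ k ∈ Finset.univ.erase i, P k (σ k)
      = ∑ σ : Equiv.Perm (Fin n), ∏ k : {k : Fin n // k ≠ i}, P k.1 (σ k.1) := by
        exact Finset.sum_congr rfl fun σ _ => hconv σ
    _ = ∑ f ∈ Finset.univ.image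
          (fun (σ : Equiv.Perm (Fin n)) (k : {k : Fin n // k ≠ i}) => σ k.1),
          ∏ k : {k : Fin n // k ≠ i}, P k.1 (f k) := by
        rw [Finset.sum_image (fun a _ b _ h => perm_restrict_inj n i h)]
    _ ≤ ∑ f : {k : Fin n // k ≠ i} → Fin n, ∏ k : {k : Fin n // k ≠ i}, P k.1 (f k) := by
        refine Finset.sum_le_sum_of_subset_of_nonneg (Finset.subset_univ _) ?_
        intro f _ _
        exact Finset.prod_nonneg fun k _ => hpos _ _
    _ = ∏ k : {k : Fin n // k ≠ i}, ∑ j, P k.1 j := by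
        rw [Finset.prod_univ_sum]
        simp [Fintype.piFinset_univ]
    _ ≤ 1 := Finset.prod_le_one (fun k _ => Finset.sum_nonneg fun j _ => hpos _ _)
        (fun k _ => hrow _)

lemma abs_det_le_rowmax (n : ℕ) (P : Matrix (Fin n) (Fin n) ℝ)
    (hpos : ∀ i j, 0 ≤ P i j) (hrow : ∀ i, ∑ j, P i j ≤ 1) (i j₀ : Fin n)
    (hmax : ∀ j, P i j ≤ P i j₀) :
    |P.det| ≤ P i j₀ := by
  have h0 : 0 ≤ P i j₀ := hpos i j₀
  calc |P.det| ≤ ∑ σ : Equiv.Perm (Fin n), ∏ k, |P k (σ k)| := abs_det_le_sum n P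
    _ = ∑ σ : Equiv.Perm (Fin n), P i (σ i) * ∏ k ∈ Finset.univ.erase i, P k (σ k) := by
        refine Finset.sum_congr rfl fun σ _ => ?_
        rw [← Finset.mul_prod_erase Finset.univ _ (Finset.mem_univ i)]
        refine congrArg₂ _ (abs_of_nonneg (hpos _ _)) (Finset.prod_congr rfl fun k _ =>
          abs_of_nonneg (hpos _ _))
    _ ≤ ∑ σ : Equiv.Perm (Fin n), P i j₀ * ∏ k ∈ Finset.univ.erase i, P k (σ k) := by
        refine Finset.sum_le_sum fun σ _ => ?_
        exact mul_le_mul_of_nonneg_right (hmax _)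
          (Finset.prod_nonneg fun k _ => hpos _ _)
    _ = P i j₀ * ∑ σ : Equiv.Perm (Fin n), ∏ k ∈ Finset.univ.erase i, P k (σ k) := by
        rw [Finset.mul_sum]
    _ ≤ P i j₀ * 1 := mul_le_mul_of_nonneg_left (sum_perm_prod_erase_le n P hpos hrow i) h0
    _ = P i j₀ := mul_one _

lemma entry_le_one (n : ℕ) (P : Matrix (Fin n) (Fin n) ℝ)
    (hpos : ∀ i j, 0 ≤ P i j) (hrow : ∀ i, ∑ j, P i j = 1) (i j : Fin n) :
    P i j ≤ 1 := by
  rw [← hrow i]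
  exact Finset.single_le_sum (fun k _ => hpos i k) (Finset.mem_univ j)

lemma other_entry_le (n : ℕ) (P : Matrix (Fin n) (Fin n) ℝ)
    (hpos : ∀ i j, 0 ≤ P i j) (hrow : ∀ i, ∑ j, P i j = 1) (i : Fin n) {j j' : Fin n}
    (hne : j' ≠ j) : P i j' ≤ 1 - P i j := by
  have h1 : P i j' ≤ ∑ k ∈ Finset.univ.erase j, P i k :=
    Finset.single_le_sum (fun k _ => hpos i k) (Finset.mem_erase.2 ⟨hne, Finset.mem_univ _⟩)
  have h2 : P i j + ∑ k ∈ Finset.univ.erase j, P i k = 1 := by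
    rw [Finset.add_sum_erase _ _ (Finset.mem_univ j)]; exact hrow i
  linarith

-- duplicate-row bound
lemma abs_det_le_of_close_rows (n : ℕ) (P : Matrix (Fin n) (Fin n) ℝ)
    (hpos : ∀ i j, 0 ≤ P i j) (hrow : ∀ i, ∑ j, P i j = 1) {i₁ i₂ : Fin n} (hne : i₁ ≠ i₂)
    (c : ℝ) (hc : ∀ j, |P i₂ j - P i₁ j| ≤ c) :
    |P.det| ≤ (Fintype.card (Equiv.Perm (Fin n))) * c := by
  have hc0 : 0 ≤ c := le_trans (abs_nonneg _) (hc i₁)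
  set M := P.updateRow i₂ (P i₂ - P i₁) with hM
  have h1 : P.det = M.det := by
    have hz : (P.updateRow i₂ (P i₁)).det = 0 := by
      refine Matrix.det_zero_of_row_eq hne ?_
      rw [Matrix.updateRow_ne hne, Matrix.updateRow_self]
    have hadd := Matrix.det_updateRow_add P i₂ (P i₂ - P i₁) (P i₁)
    rw [sub_add_cancel, Matrix.updateRow_eq_self, hz, add_zero] at hadd
    exact hadd
  rw [h1]
  calc |M.det| ≤ ∑ σ : Equiv.Perm (Fin n), ∏ k, |M k (σ k)| := abs_det_le_sum n M
    _ ≤ ∑ σ : Equiv.Perm (Fin n), c := by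
        refine Finset.sum_le_sum fun σ _ => ?_
        rw [← Finset.mul_prod_erase Finset.univ _ (Finset.mem_univ i₂)]
        have h2 : |M i₂ (σ i₂)| ≤ c := by
          rw [hM, Matrix.updateRow_self]
          exact hc _
        have h3 : ∏ k ∈ Finset.univ.erase i₂, |M k (σ k)| ≤ 1 := by
          refine Finset.prod_le_one (fun k _ => abs_nonneg _) fun k hk => ?_
          rw [hM, Matrix.updateRow_ne (Finset.ne_of_mem_erase hk)]
          rw [abs_of_nonneg (hpos _ _)]
          exact entry_le_one n P hpos hrow _ _
        calc |M i₂ (σ i₂)| * ∏ k ∈ Finset.univ.erase i₂, |M k (σ k)|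
            ≤ c * 1 := mul_le_mul h2 h3 (Finset.prod_nonneg fun k _ => abs_nonneg _) hc0
          _ = c := mul_one c
    _ = (Fintype.card (Equiv.Perm (Fin n))) * c := by
        rw [Finset.sum_const, Finset.card_univ, nsmul_eq_mul]

lemma abs_det_le_one (n : ℕ) (P : Matrix (Fin n) (Fin n) ℝ)
    (hpos : ∀ i j, 0 ≤ P i j) (hrow : ∀ i, ∑ j, P i j = 1) :
    |P.det| ≤ 1 := by
  calc |P.det| ≤ ∑ σ : Equiv.Perm (Fin n), ∏ k, |P k (σ k)| := abs_det_le_sum n P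
    _ = ∑ σ ∈ Finset.univ.image (fun (σ : Equiv.Perm (Fin n)) => (σ : Fin n → Fin n)),
          ∏ k, P k (σ k) := by
        rw [Finset.sum_image (fun a _ b _ h => Equiv.coe_fn_injective h)]
        exact Finset.sum_congr rfl fun σ _ => Finset.prod_congr rfl fun k _ =>
          abs_of_nonneg (hpos _ _)
    _ ≤ ∑ f : Fin n → Fin n, ∏ k, P k (f k) := by
        refine Finset.sum_le_sum_of_subset_of_nonneg (Finset.subset_univ _) ?_
        exact fun f _ _ => Finset.prod_nonneg fun k _ => hpos _ _
    _ = ∏ k, ∑ j, P k j := (Fintype.prod_sum fun k j => P k j).symm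
    _ = 1 := by simp [hrow]

/-- permutation matrix -/
def permMat (n : ℕ) (σ : Equiv.Perm (Fin n)) : Matrix (Fin n) (Fin n) ℝ :=
  fun i j => if j = σ i then 1 else 0

lemma exists_perm_close (n : ℕ) (P : Matrix (Fin n) (Fin n) ℝ)
    (hpos : ∀ i j, 0 ≤ P i j) (hrow : ∀ i, ∑ j, P i j = 1) (ε : ℝ)
    (hdet : 1 - ε ≤ P.det) (hε : ((Fintype.card (Equiv.Perm (Fin n))) + 1 : ℝ) * ε < 1) :
    ∃ σ : Equiv.Perm (Fin n), ∀ i j, |P i j - permMat n σ i j| ≤ ε := by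
  have hd1 : P.det ≤ 1 := (le_abs_self _).trans (abs_det_le_one n P hpos hrow)
  have hε0 : 0 ≤ ε := by linarith
  -- argmax function
  have hargmax : ∀ i : Fin n, ∃ j₀ : Fin n, ∀ j, P i j ≤ P i j₀ := by
    intro i
    obtain ⟨j₀, _, hj₀⟩ := Finset.exists_max_image Finset.univ (P i) ⟨i, Finset.mem_univ i⟩
    exact ⟨j₀, fun j => hj₀ j (Finset.mem_univ j)⟩
  choose f hf using hargmax
  have hbig : ∀ i, 1 - ε ≤ P i (f i) := by
    intro i
    calc 1 - ε ≤ P.det := hdet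
      _ ≤ |P.det| := le_abs_self _
      _ ≤ P i (f i) := abs_det_le_rowmax n P hpos (fun i => le_of_eq (hrow i)) i (f i) (hf i)
  have hNpos : (1:ℝ) ≤ (Fintype.card (Equiv.Perm (Fin n)) : ℝ) := by
    exact_mod_cast Fintype.card_pos
  have hinj : Function.Injective f := by
    intro i₁ i₂ hi
    by_contra hne
    have hc : ∀ j, |P i₂ j - P i₁ j| ≤ ε := by
      intro j
      have e2 : 1 - ε ≤ P i₂ (f i₁) := by rw [hi]; exact hbig i₂
      have e1 : 1 - ε ≤ P i₁ (f i₁) := hbig i₁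
      rcases eq_or_ne j (f i₁) with rfl | hj
      · have c1 := entry_le_one n P hpos hrow i₁ (f i₁)
        have c2 := entry_le_one n P hpos hrow i₂ (f i₁)
        rw [abs_le]; constructor <;> linarith
      · have b1 : P i₁ j ≤ 1 - P i₁ (f i₁) := other_entry_le n P hpos hrow i₁ hj
        have b2 : P i₂ j ≤ 1 - P i₂ (f i₁) := other_entry_le n P hpos hrow i₂ hj
        have d1 := hpos i₁ j
        have d2 := hpos i₂ j
        rw [abs_le]; constructor <;> linarith
    have := abs_det_le_of_close_rows n P hpos hrow hne ε hc
    have h2 : (1:ℝ) - ε ≤ |P.det| := hdet.trans (le_abs_self _)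
    nlinarith
  have hbij : Function.Bijective f := Finite.injective_iff_bijective.1 hinj
  refine ⟨Equiv.ofBijective f hbij, fun i j => ?_⟩
  have hflip : permMat n (Equiv.ofBijective f hbij) i j = if j = f i then 1 else 0 := rfl
  rcases eq_or_ne j (f i) with rfl | hj
  · rw [hflip, if_pos rfl]
    have := hbig i
    have := entry_le_one n P hpos hrow i (f i)
    rw [abs_le]; constructor <;> linarith
  · rw [hflip, if_neg hj]
    have b1 : P i j ≤ 1 - P i (f i) := other_entry_le n P hpos hrow i hj
    have := hbig i
    have := hpos i j
    rw [abs_le]; constructor <;> linarith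

lemma permMat_mul (n : ℕ) (σ τ : Equiv.Perm (Fin n)) :
    permMat n σ * permMat n τ = permMat n (σ.trans τ) := by
  ext i j
  rw [Matrix.mul_apply]
  simp only [permMat, Equiv.trans_apply]
  rw [Finset.sum_eq_single (σ i)]
  · simp
    congr
  · intro k _ hk
    simp [hk]
  · simp

lemma permMat_one (n : ℕ) : permMat n 1 = (1 : Matrix (Fin n) (Fin n) ℝ) := by
  ext i j
  simp [permMat, Matrix.one_apply, eq_comm]

lemma permMat_unique (n : ℕ) (A : Matrix (Fin n) (Fin n) ℝ) (σ τ : Equiv.Perm (Fin n))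
    (b1 b2 : ℝ) (hb : b1 + b2 < 1)
    (h1 : ∀ i j, |A i j - permMat n σ i j| ≤ b1)
    (h2 : ∀ i j, |A i j - permMat n τ i j| ≤ b2) : σ = τ := by
  by_contra hne
  have : ∃ i, σ i ≠ τ i := by
    by_contra hh
    push_neg at hh
    exact hne (Equiv.ext hh)
  obtain ⟨i, hi⟩ := this
  have e1 : permMat n σ i (σ i) = 1 := by simp [permMat]
  have e2 : permMat n τ i (σ i) = 0 := by simp [permMat, hi]
  have t1 := h1 i (σ i)
  have t2 := h2 i (σ i)
  rw [e1] at t1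
  rw [e2, sub_zero] at t2
  have t1' := abs_le.mp t1
  have t2' := abs_le.mp t2
  linarith [t1'.1, t2'.2]

lemma prod_close (n : ℕ) (A B : Matrix (Fin n) (Fin n) ℝ)
    (hApos : ∀ i j, 0 ≤ A i j) (hArow : ∀ i, ∑ j, A i j = 1)
    (σ τ : Equiv.Perm (Fin n)) (ε : ℝ)
    (hA : ∀ i j, |A i j - permMat n σ i j| ≤ ε)
    (hB : ∀ i j, |B i j - permMat n τ i j| ≤ ε) :
    ∀ i j, |(A * B) i j - (permMat n σ * permMat n τ) i j| ≤ 2 * ε := by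
  intro i j
  rw [Matrix.mul_apply, Matrix.mul_apply]
  have key : ∑ k, A i k * B k j - ∑ k, permMat n σ i k * permMat n τ k j
      = (∑ k, A i k * (B k j - permMat n τ k j))
        + (∑ k, (A i k - permMat n σ i k) * permMat n τ k j) := by
    rw [← Finset.sum_add_distrib, ← Finset.sum_sub_distrib]
    exact Finset.sum_congr rfl fun k _ => by ring
  rw [key]
  have h1 : |∑ k, A i k * (B k j - permMat n τ k j)| ≤ ε := by
    calc |∑ k, A i k * (B k j - permMat n τ k j)|
        ≤ ∑ k, |A i k * (B k j - permMat n τ k j)| := Finset.abs_sum_le_sum_abs _ _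
      _ ≤ ∑ k, A i k * ε := by
          refine Finset.sum_le_sum fun k _ => ?_
          rw [abs_mul, abs_of_nonneg (hApos i k)]
          exact mul_le_mul_of_nonneg_left (hB k j) (hApos i k)
      _ = ε := by rw [← Finset.sum_mul, hArow i, one_mul]
  have h2 : |∑ k, (A i k - permMat n σ i k) * permMat n τ k j| ≤ ε := by
    have hsum : ∑ k, (A i k - permMat n σ i k) * permMat n τ k j
        = A i (τ.symm j) - permMat n σ i (τ.symm j) := by
      have hcond : ∀ k : Fin n, (A i k - permMat n σ i k) * permMat n τ k j
          = if k = τ.symm j then (A i k - permMat n σ i k) else 0 := by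
        intro k
        simp only [permMat, mul_ite, mul_one, mul_zero]
        congr 1
        rw [← Equiv.symm_apply_eq]
        exact propext eq_comm
      rw [Finset.sum_congr rfl fun k _ => hcond k, Finset.sum_ite_eq' Finset.univ _ _]
      simp
    rw [hsum]
    exact hA i (τ.symm j)
  calc |∑ k, A i k * (B k j - permMat n τ k j) + ∑ k, (A i k - permMat n σ i k) * permMat n τ k j|
      ≤ |∑ k, A i k * (B k j - permMat n τ k j)|
        + |∑ k, (A i k - permMat n σ i k) * permMat n τ k j| := abs_add_le _ _
    _ ≤ ε + ε := add_le_add h1 h2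
    _ = 2 * ε := by ring

/-- A semigroup of stochastic matrices containing an invertible matrix is continuous. -/
theorem stochastic_matrix_semigroup_continuous (n : ℕ) (T : ℝ → Matrix (Fin n) (Fin n) ℝ)
    (h0 : T 0 = 1)
    (hmul : ∀ s t : ℝ, 0 ≤ s → 0 ≤ t → T (t + s) = T t * T s)
    (hpos : ∀ t : ℝ, 0 ≤ t → ∀ i j, 0 ≤ T t i j)
    (hrow : ∀ t : ℝ, 0 ≤ t → ∀ i, ∑ j, T t i j = 1)
    (hinv : ∃ t₀ : ℝ, 0 < t₀ ∧ IsUnit (T t₀)) :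
    ContinuousOn T (Set.Ici 0) := by
  obtain ⟨t₀, ht₀, hU⟩ := hinv
  set d : ℝ → ℝ := fun t => (T t).det with hd
  have hdmul : ∀ s t : ℝ, 0 ≤ s → 0 ≤ t → d (t + s) = d t * d s := by
    intro s t hs ht
    simp only [hd]
    rw [hmul s t hs ht, Matrix.det_mul]
  have hd0 : ∀ t : ℝ, 0 ≤ t → 0 ≤ d t := by
    intro t ht
    have h2 : 0 ≤ t / 2 := by linarith
    have := hdmul (t/2) (t/2) h2 h2
    rw [add_halves] at this
    rw [this]
    exact mul_self_nonneg _
  have hdle1 : ∀ t : ℝ, 0 ≤ t → d t ≤ 1 := fun t ht =>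
    (le_abs_self _).trans (abs_det_le_one n (T t) (hpos t ht) (hrow t ht))
  have hdt₀ : 0 < d t₀ := by
    have hne : d t₀ ≠ 0 := by
      have := (Matrix.isUnit_iff_isUnit_det _).mp hU
      exact this.ne_zero
    exact lt_of_le_of_ne (hd0 t₀ ht₀.le) (Ne.symm hne)
  have hdlow : ∀ s : ℝ, 0 ≤ s → s ≤ t₀ → d t₀ ≤ d s := by
    intro s hs hst
    have h1 : (0:ℝ) ≤ t₀ - s := by linarith
    have := hdmul s (t₀ - s) hs h1
    rw [sub_add_cancel] at this
    rw [this]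
    calc d (t₀ - s) * d s ≤ 1 * d s :=
        mul_le_mul_of_nonneg_right (hdle1 _ h1) (hd0 s hs)
      _ = d s := one_mul _
  have hdpow : ∀ (m : ℕ) (u : ℝ), 0 ≤ u → d (m * u) = d u ^ m := by
    intro m
    induction m with
    | zero => intro u hu; simp [hd, h0]
    | succ k ih =>
      intro u hu
      have h1 : ((k+1 : ℕ) : ℝ) * u = (k : ℝ) * u + u := by push_cast; ring
      rw [h1, hdmul u ((k:ℝ)*u) hu (by positivity), ih u hu, pow_succ]
  have Ldet : ∀ ε : ℝ, 0 < ε → ε < 1 → ∃ δ : ℝ, 0 < δ ∧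
      ∀ h : ℝ, 0 < h → h ≤ δ → 1 - ε ≤ d h := by
    intro ε hε hε1
    obtain ⟨m, hm⟩ : ∃ m : ℕ, (1 - ε)^m < d t₀ := by
      have htend := tendsto_pow_atTop_nhds_zero_of_lt_one (by linarith : (0:ℝ) ≤ 1 - ε)
        (by linarith : 1 - ε < 1)
      exact (htend.eventually (gt_mem_nhds hdt₀)).exists
    set M : ℕ := m + 1 with hM
    have hMp : (0:ℝ) < M := by positivity
    have hm' : (1 - ε)^M < d t₀ :=
      lt_of_le_of_lt (pow_le_pow_of_le_one (by linarith) (by linarith) (Nat.le_succ m)) hm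
    refine ⟨t₀ / M, by positivity, fun h hh hhδ => ?_⟩
    by_contra hlt
    push_neg at hlt
    have hMh : (M:ℝ) * h ≤ t₀ := by
      rw [← le_div_iff₀' hMp]
      exact hhδ
    have h1 : d ((M:ℝ) * h) = d h ^ M := hdpow M h hh.le
    have h2 : d t₀ ≤ d ((M:ℝ)*h) := hdlow _ (by positivity) hMh
    have h3 : d h ^ M ≤ (1-ε)^M := pow_le_pow_left₀ (hd0 h hh.le) hlt.le M
    linarith
  -- L1 : T h close to identity for small h
  have L1 : ∀ ε : ℝ, 0 < ε → ∃ δ : ℝ, 0 < δ ∧ ∀ h : ℝ, 0 < h → h ≤ δ →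
      ∀ i j, |T h i j - (1 : Matrix (Fin n) (Fin n) ℝ) i j| ≤ ε := by
    intro ε hε
    set N : ℕ := Fintype.card (Equiv.Perm (Fin n)) with hN
    have hN1 : 1 ≤ N := Fintype.card_pos
    have hN1' : (1:ℝ) ≤ N := by exact_mod_cast hN1
    set ε₀ : ℝ := min ε (1/(2*N+2)) with hε₀def
    have hε₀pos : 0 < ε₀ := lt_min hε (by positivity)
    have hε₀le : ε₀ ≤ ε := min_le_left _ _
    have hε₀small : ε₀ ≤ 1/(2*N+2) := min_le_right _ _
    have hNe : ((N:ℝ) + 1) * ε₀ < 1 := by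
      have : ((N:ℝ) + 1) * ε₀ ≤ ((N:ℝ)+1) * (1/(2*N+2)) :=
        mul_le_mul_of_nonneg_left hε₀small (by positivity)
      have h2 : ((N:ℝ)+1) * (1/(2*N+2)) = 1/2 := by field_simp
      linarith
    have hq : 1/(2*(N:ℝ)+2) ≤ 1/4 := by
      apply one_div_le_one_div_of_le
      · norm_num
      · linarith
    have h3e : 3 * ε₀ < 1 := by linarith
    have hε₀1 : ε₀ < 1 := by nlinarith
    obtain ⟨δ, hδ, hdet⟩ := Ldet ε₀ hε₀pos hε₀1
    have Hσ : ∀ h : ℝ, 0 < h → h ≤ δ →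
        ∃ σ : Equiv.Perm (Fin n), ∀ i j, |T h i j - permMat n σ i j| ≤ ε₀ := by
      intro h hh hhδ
      exact exists_perm_close n (T h) (hpos h hh.le) (hrow h hh.le) ε₀ (hdet h hh hhδ) hNe
    set σf : ℝ → Equiv.Perm (Fin n) := fun h =>
      if hh : 0 < h ∧ h ≤ δ then Classical.choose (Hσ h hh.1 hh.2) else 1 with hσf
    have hclose : ∀ h : ℝ, 0 < h → h ≤ δ →
        ∀ i j, |T h i j - permMat n (σf h) i j| ≤ ε₀ := by
      intro h hh hhδ
      simp only [hσf, dif_pos (And.intro hh hhδ)]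
      exact Classical.choose_spec (Hσ h hh hhδ)
    have hom : ∀ s u : ℝ, 0 < s → 0 < u → s + u ≤ δ →
        σf (s + u) = (σf s).trans (σf u) := by
      intro s u hs hu hsu
      have hs' : s ≤ δ := by linarith
      have hu' : u ≤ δ := by linarith
      have hTsu : T (s + u) = T s * T u := hmul u s hu.le hs.le
      have hcl := prod_close n (T s) (T u) (hpos s hs.le) (hrow s hs.le) (σf s) (σf u) ε₀
        (hclose s hs hs') (hclose u hu hu')
      rw [permMat_mul] at hcl
      refine permMat_unique n (T (s+u)) (σf (s+u)) ((σf s).trans (σf u)) ε₀ (2*ε₀)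
        (by linarith) (hclose (s+u) (by linarith) hsu) ?_
      intro i j
      rw [hTsu]
      exact hcl i j
    have hpow : ∀ (k : ℕ) (u : ℝ), 0 < u → ((k:ℝ)+1) * u ≤ δ →
        σf (((k:ℝ)+1) * u) = (σf u)^(k+1) := by
      intro k
      induction k with
      | zero => intro u hu hδ'; simp
      | succ k ih =>
        intro u hu hδ'
        have hsplit : ((k:ℝ)+1+1) * u = ((k:ℝ)+1) * u + u := by ring
        have hku : (0:ℝ) < ((k:ℝ)+1) * u := by positivity
        have hcast : (((k+1:ℕ)):ℝ) + 1 = ((k:ℝ)+1+1) := by push_cast; ring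
        rw [hcast] at hδ' ⊢
        have hexp : ((k:ℝ)+1)*u + u = ((k:ℝ)+1+1)*u := by ring
        have hle : ((k:ℝ)+1) * u ≤ δ := by linarith
        rw [hsplit, hom _ _ hku hu (by linarith), ih u hu hle]
        have : ((σf u)^(k+1)).trans (σf u) = σf u * (σf u)^(k+1) := rfl
        rw [this, ← pow_succ']
    refine ⟨δ, hδ, fun h hh hhδ i j => ?_⟩
    have hNne : ((N:ℝ)) ≠ 0 := by positivity
    have huh : h / N > 0 := by positivity
    have hNh : ((N - 1 : ℕ):ℝ) + 1 = (N:ℝ) := by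
      have : (1:ℕ) ≤ N := hN1
      push_cast [Nat.cast_sub this]
      ring
    have heq : (((N-1:ℕ):ℝ)+1) * (h / N) = h := by
      rw [hNh]; field_simp
    have h1 := hpow (N-1) (h/N) huh (by rw [heq]; exact hhδ)
    rw [heq] at h1
    have h2 : (N - 1) + 1 = N := Nat.succ_pred_eq_of_pos hN1
    rw [h2] at h1
    have h3 : (σf (h/N))^N = 1 := pow_card_eq_one
    rw [h3] at h1
    have := hclose h hh hhδ i j
    rw [h1, permMat_one] at this
    linarith
  -- deduce continuity
  intro a ha
  have ha' : (0:ℝ) ≤ a := ha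
  have key : ∀ u s : ℝ, 0 ≤ u → 0 ≤ s → ∀ (i j : Fin n) (c : ℝ),
      (∀ k l, |T s k l - (1 : Matrix (Fin n) (Fin n) ℝ) k l| ≤ c) → 0 ≤ c →
      |T (u + s) i j - T u i j| ≤ n * c := by
    intro u s hu hs i j c hc hc0
    have hT : T (u + s) = T u * T s := hmul s u hs hu
    have hTu : T u i j = ∑ k, T u i k * (1 : Matrix (Fin n) (Fin n) ℝ) k j := by
      have : T u = T u * 1 := (mul_one _).symm
      conv_lhs => rw [this]
      rw [Matrix.mul_apply]
    rw [hT, Matrix.mul_apply, hTu, ← Finset.sum_sub_distrib]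
    calc |∑ k, (T u i k * T s k j - T u i k * (1 : Matrix (Fin n) (Fin n) ℝ) k j)|
        ≤ ∑ k, |T u i k * T s k j - T u i k * (1 : Matrix (Fin n) (Fin n) ℝ) k j| :=
          Finset.abs_sum_le_sum_abs _ _
      _ ≤ ∑ _k : Fin n, c := by
          refine Finset.sum_le_sum fun k _ => ?_
          rw [← mul_sub, abs_mul, abs_of_nonneg (hpos u hu i k)]
          calc T u i k * |T s k j - (1 : Matrix (Fin n) (Fin n) ℝ) k j|
              ≤ 1 * c := mul_le_mul (entry_le_one n (T u) (hpos u hu) (hrow u hu) i k)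
                (hc k j) (abs_nonneg _) zero_le_one
            _ = c := one_mul _
      _ = n * c := by simp [mul_comm]
  apply tendsto_pi_nhds.2
  intro i
  apply tendsto_pi_nhds.2
  intro j
  rw [Metric.tendsto_nhdsWithin_nhds]
  intro ε hε
  have hε' : 0 < ε / (2 * (n + 1)) := by positivity
  obtain ⟨δ, hδ, hL⟩ := L1 (ε / (2 * (n + 1))) hε'
  refine ⟨δ, hδ, fun {x} hx hdist => ?_⟩
  have hx' : (0:ℝ) ≤ x := hx
  have hbound : |T x i j - T a i j| ≤ n * (ε / (2 * (n + 1))) := by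
    rcases lt_trichotomy x a with hlt | heq | hgt
    · have hs : 0 < a - x := by linarith
      have hsδ : a - x ≤ δ := by
        rw [Real.dist_eq, abs_sub_comm] at hdist
        rw [abs_of_pos hs] at hdist
        linarith
      have := key x (a - x) hx' hs.le i j _ (fun k l => hL (a-x) hs hsδ k l) hε'.le
      rw [show x + (a - x) = a by ring] at this
      rw [abs_sub_comm]
      exact this
    · rw [heq]
      simp [abs_nonneg]
      positivity
    · have hs : 0 < x - a := by linarith
      have hsδ : x - a ≤ δ := by
        rw [Real.dist_eq, abs_of_pos (by linarith : (0:ℝ) < x - a)] at hdist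
        linarith
      have := key a (x - a) ha' hs.le i j _ (fun k l => hL (x-a) hs hsδ k l) hε'.le
      rw [show a + (x - a) = x by ring] at this
      exact this
  rw [Real.dist_eq]
  have hn1 : (n:ℝ) * (ε / (2 * (n + 1))) < ε := by
    rw [div_eq_mul_inv]
    have h1 : (n:ℝ) < 2 * (n+1) := by push_cast; linarith
    have h2 : (0:ℝ) < 2 * ((n:ℝ)+1) := by positivity
    calc (n:ℝ) * (ε * (2 * (↑n + 1))⁻¹) = ε * ((n:ℝ) / (2 * (n+1))) := by ring_nf
      _ < ε * 1 := by
          refine mul_lt_mul_of_pos_left ?_ hε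
          rw [div_lt_one h2]
          push_cast
          linarith
      _ = ε := mul_one _
  linarith [hbound]
end
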